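/- arXiv:2201.08284 — 6 statements merged into one kernel-verified Lean document; each statement's English description precedes it below -/
import Mathlib

section
/- Let γ > 0, let n be a positive integer, let X₁,…,Xₙ be independent random variables each with the Gamma(γ) distribution, and let Φ : (0,∞) → (0,∞) be completely monotone. If a = (a₁,…,aₙ) and b = (b₁,…,bₙ) are vectors of nonnegative reals such that a majorizes b, then E Φ(Σⱼ √aⱼ Xⱼ) ≥ E Φ(Σⱼ √bⱼ Xⱼ). -/
open MeasureTheory ProbabilityTheory Real

/-- `a` majorizes `b`: for every `k`, the sum of the `k` largest entries of `a` is at least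
that of `b` (expressed via subsets of each cardinality), with equal total sums. -/
def Majorizes {n : ℕ} (a b : Fin n → ℝ) : Prop :=
  (∀ s : Finset (Fin n), ∃ t : Finset (Fin n), t.card = s.card ∧ ∑ j ∈ s, b j ≤ ∑ j ∈ t, a j)
  ∧ ∑ j, a j = ∑ j, b j

/-- `Φ : (0,∞) → (0,∞)` is completely monotone: infinitely differentiable on `(0,∞)`,
positive, with `(-1)^m Φ^{(m)}(x) ≥ 0` for all `m` and `x > 0`. -/
def CompletelyMonotone (Φ : ℝ → ℝ) : Prop :=
  ContDiffOn ℝ (⊤ : ℕ∞) Φ (Set.Ioi 0) ∧ (∀ x > 0, 0 < Φ x) ∧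
  ∀ m : ℕ, ∀ x > 0, 0 ≤ (-1 : ℝ) ^ m * iteratedDerivWithin m Φ (Set.Ioi 0) x

section Aux

open Finset

/-- Abel summation identity. -/
private lemma abel_identity (d x : ℕ → ℝ) (n : ℕ) :
    ∑ i ∈ range n, d i * x i
      = (∑ i ∈ range n, (d i - d (i+1)) * (∑ j ∈ range (i+1), x j))
        + d n * ∑ j ∈ range n, x j := by
  induction n with
  | zero => simp
  | succ n ih =>
      rw [sum_range_succ, ih, sum_range_succ _ n, sum_range_succ x n]
      ring

private lemma abel_le (d x y : ℕ → ℝ) (n : ℕ)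
    (hd : ∀ i, d (i+1) ≤ d i)
    (hpart : ∀ k, k ≤ n → ∑ j ∈ range k, x j ≤ ∑ j ∈ range k, y j)
    (htot : ∑ j ∈ range n, x j = ∑ j ∈ range n, y j) :
    ∑ i ∈ range n, d i * x i ≤ ∑ i ∈ range n, d i * y i := by
  rw [abel_identity d x n, abel_identity d y n, htot]
  refine add_le_add (sum_le_sum fun i hi => ?_) le_rfl
  exact mul_le_mul_of_nonneg_left (hpart (i+1) (mem_range.1 hi)) (sub_nonneg.2 (hd i))

/-- the `k` smallest indices of `Fin n`, as a `Finset`. -/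
private def firstk (n k : ℕ) : Finset (Fin n) := univ.filter (fun j : Fin n => (j : ℕ) < k)

private lemma firstk_eq_image {n k : ℕ} (hk : k ≤ n) :
    firstk n k = Finset.image (Fin.castLE hk) univ := by
  ext j
  simp only [firstk, mem_filter, mem_univ, true_and, Finset.mem_image]
  constructor
  · intro hj; exact ⟨⟨j, hj⟩, rfl⟩
  · rintro ⟨i, rfl⟩; exact i.2

private lemma card_firstk {n k : ℕ} (hk : k ≤ n) : (firstk n k).card = k := by
  rw [firstk_eq_image hk, Finset.card_image_of_injective _ (Fin.castLE_injective hk)]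
  simp

/-- any `k`-subset sum is at most the sum of the `k` largest entries, for antitone `u`. -/
private lemma sum_le_sum_firstk {n : ℕ} (u : Fin n → ℝ) (hu : Antitone u)
    (t : Finset (Fin n)) :
    ∑ j ∈ t, u j ≤ ∑ j ∈ firstk n t.card, u j := by
  set k := t.card with hkdef
  have hk : k ≤ n := by
    simpa using (Finset.card_le_univ t)
  have e := t.orderIsoOfFin hkdef.symm
  set g : Fin k → Fin n := fun i => (e i : Fin n) with hg
  have hgmono : StrictMono g := by
    intro i j hij
    have := e.strictMono hij
    exact this
  have hle : ∀ m : ℕ, ∀ h : m < k, m ≤ (g ⟨m, h⟩ : ℕ) := by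
    intro m
    induction m with
    | zero => intro h; exact Nat.zero_le _
    | succ m ih =>
        intro h
        have h' : m < k := lt_trans (Nat.lt_succ_self m) h
        have h1 : g ⟨m, h'⟩ < g ⟨m+1, h⟩ := hgmono (by simp [Fin.lt_def])
        have h2 := ih h'
        have h3 : (g ⟨m, h'⟩ : ℕ) < (g ⟨m+1, h⟩ : ℕ) := h1
        omega
  have hsum1 : ∑ j ∈ t, u j = ∑ i : Fin k, u (g i) := by
    rw [← Finset.sum_coe_sort t u]
    exact (Fintype.sum_equiv e.toEquiv _ _ (fun i => rfl)).symm
  have hsum2 : ∑ j ∈ firstk n k, u j = ∑ i : Fin k, u (Fin.castLE hk i) := by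
    rw [firstk_eq_image hk, Finset.sum_image]
    intro i _ j _ hij
    exact Fin.castLE_injective hk hij
  rw [hsum1, hsum2]
  refine Finset.sum_le_sum fun i _ => hu ?_
  rw [Fin.le_def]
  exact hle i.1 i.2

private lemma sum_range_extend {n : ℕ} (v : Fin n → ℝ) {k : ℕ} (hk : k ≤ n) :
    ∑ i ∈ range k, (if h : i < n then v ⟨i, h⟩ else 0) = ∑ j ∈ firstk n k, v j := by
  rw [firstk_eq_image hk, Finset.sum_image (fun i _ j _ h => Fin.castLE_injective hk h),
    ← Fin.sum_univ_eq_sum_range (fun i => if h : i < n then v ⟨i, h⟩ else 0) k]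
  refine Finset.sum_congr rfl fun i _ => ?_
  have hi : (i : ℕ) < n := lt_of_lt_of_le i.2 hk
  rw [dif_pos hi]
  rfl

/-- HLP: majorization gives `b` as a convex combination of permutations of `a`. -/
private lemma majorizes_exists_weights {n : ℕ} (hn : 0 < n) (a b : Fin n → ℝ)
    (hmaj : Majorizes a b) :
    ∃ w : Equiv.Perm (Fin n) → ℝ, (∀ p, 0 ≤ w p) ∧ (∑ p, w p) = 1 ∧
      ∀ j, b j = ∑ p : Equiv.Perm (Fin n), w p * a (p j) := by
  classical
  set K : Set (Fin n → ℝ) := convexHull ℝ (Set.range fun p : Equiv.Perm (Fin n) => a ∘ p) with hK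
  have hbK : b ∈ K := by
    by_contra hbK
    have hKconv : Convex ℝ K := convex_convexHull _ _
    have hKcl : IsClosed K := ((Set.finite_range _).isCompact_convexHull ℝ).isClosed
    obtain ⟨f, u, hfK, hub⟩ := geometric_hahn_banach_closed_point hKconv hKcl hbK
    set c : Fin n → ℝ := fun j => f (fun k => if j = k then 1 else 0) with hc
    have hf_eq : ∀ y : Fin n → ℝ, f y = ∑ j, y j * c j := by
      intro y
      conv_lhs => rw [pi_eq_sum_univ y]
      rw [map_sum]
      exact Finset.sum_congr rfl fun j _ => by rw [_root_.map_smul, smul_eq_mul]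
    -- sorting permutations
    set ρc := Tuple.sort (fun i => - c i) with hρc
    set ρa := Tuple.sort (fun i => - a i) with hρa
    set ρb := Tuple.sort (fun i => - b i) with hρb
    set d : Fin n → ℝ := fun i => c (ρc i) with hd
    set A : Fin n → ℝ := fun i => a (ρa i) with hA
    set B : Fin n → ℝ := fun i => b (ρb i) with hB
    have hdanti : Antitone d := by
      intro i j hij
      have := Tuple.monotone_sort (fun i => - c i) hij
      simp only [Function.comp_apply] at this
      rw [← hρc] at this
      simp only [hd]
      linarith
    have hAanti : Antitone A := by
      intro i j hij
      have := Tuple.monotone_sort (fun i => - a i) hij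
      simp only [Function.comp_apply] at this
      rw [← hρa] at this
      simp only [hA]
      linarith
    have hBanti : Antitone B := by
      intro i j hij
      have := Tuple.monotone_sort (fun i => - b i) hij
      simp only [Function.comp_apply] at this
      rw [← hρb] at this
      simp only [hB]
      linarith
    -- Abel comparison of sorted sums
    set dN : ℕ → ℝ := fun i => if h : i < n then d ⟨i, h⟩ else d ⟨n-1, by omega⟩ with hdN
    set AN : ℕ → ℝ := fun i => if h : i < n then A ⟨i, h⟩ else 0 with hAN
    set BN : ℕ → ℝ := fun i => if h : i < n then B ⟨i, h⟩ else 0 with hBN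
    have hdNle : ∀ i, dN (i+1) ≤ dN i := by
      intro i
      simp only [hdN]
      rcases lt_or_ge (i+1) n with h1 | h1
      · have h0 : i < n := by omega
        rw [dif_pos h1, dif_pos h0]
        exact hdanti (by simp [Fin.le_def])
      · rcases lt_or_ge i n with h0 | h0
        · have hieq : i = n - 1 := by omega
          rw [dif_neg (by omega), dif_pos h0]
          subst hieq
          exact le_refl _
        · rw [dif_neg (by omega), dif_neg (by omega)]
    have hpart : ∀ k, k ≤ n → ∑ j ∈ range k, BN j ≤ ∑ j ∈ range k, AN j := by
      intro k hkn
      rw [hBN, hAN, sum_range_extend B hkn, sum_range_extend A hkn]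
      have hL : ∑ j ∈ firstk n k, B j = ∑ j ∈ (firstk n k).image ρb, b j :=
        (Finset.sum_image (fun i _ j _ h => ρb.injective h)).symm
      obtain ⟨t, htcard, hle⟩ := hmaj.1 ((firstk n k).image ρb)
      have hcardim : ((firstk n k).image ρb).card = k := by
        rw [Finset.card_image_of_injective _ ρb.injective, card_firstk hkn]
      have hR : ∑ j ∈ t, a j = ∑ i ∈ t.image ρa.symm, A i := by
        rw [Finset.sum_image (fun i _ j _ h => (Equiv.injective _) h)]
        exact (Finset.sum_congr rfl fun j _ => by simp [hA]).symm
      have hcardt : (t.image ρa.symm).card = k := by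
        rw [Finset.card_image_of_injective _ (Equiv.injective _), htcard, hcardim]
      have htop := sum_le_sum_firstk A hAanti (t.image ρa.symm)
      rw [hcardt] at htop
      calc ∑ j ∈ firstk n k, B j = ∑ j ∈ (firstk n k).image ρb, b j := hL
        _ ≤ ∑ j ∈ t, a j := hle
        _ = ∑ i ∈ t.image ρa.symm, A i := hR
        _ ≤ ∑ j ∈ firstk n k, A j := htop
    have hfirstk_univ : firstk n n = Finset.univ := by
      ext j; simp [firstk, j.2]
    have htot : ∑ j ∈ range n, BN j = ∑ j ∈ range n, AN j := by
      rw [hBN, hAN, sum_range_extend B le_rfl, sum_range_extend A le_rfl, hfirstk_univ]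
      have h1 : ∑ j : Fin n, B j = ∑ j, b j := Equiv.sum_comp ρb b
      have h2 : ∑ j : Fin n, A j = ∑ j, a j := Equiv.sum_comp ρa a
      rw [h1, h2, hmaj.2]
    have habel := abel_le dN BN AN n hdNle hpart htot
    have hS1 : ∑ i ∈ range n, dN i * BN i = ∑ i : Fin n, d i * B i := by
      rw [← Fin.sum_univ_eq_sum_range (fun i => dN i * BN i) n]
      refine Finset.sum_congr rfl fun i _ => ?_
      simp only [hdN, hBN]
      rw [dif_pos i.isLt, dif_pos i.isLt]
    have hS2 : ∑ i ∈ range n, dN i * AN i = ∑ i : Fin n, d i * A i := by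
      rw [← Fin.sum_univ_eq_sum_range (fun i => dN i * AN i) n]
      refine Finset.sum_congr rfl fun i _ => ?_
      simp only [hdN, hAN]
      rw [dif_pos i.isLt, dif_pos i.isLt]
    have hsorted : ∑ i : Fin n, d i * B i ≤ ∑ i : Fin n, d i * A i := by
      rw [← hS1, ← hS2]; exact habel
    -- rearrangement: f b ≤ ∑ d i * B i
    have hmono : Monovary d B := by
      intro i j hBij
      rcases le_total i j with h | h
      · exact absurd hBij (not_lt.2 (hBanti h))
      · exact hdanti h
    have hrearr : ∑ j : Fin n, c j * b j ≤ ∑ i : Fin n, d i * B i := by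
      have h0 : ∑ j : Fin n, c j * b j = ∑ i : Fin n, d i * b (ρc i) :=
        (Equiv.sum_comp ρc (fun j => c j * b j)).symm
      have h1 : ∀ i, b (ρc i) = B ((ρb.symm * ρc) i) := by
        intro i
        simp [hB, Equiv.Perm.mul_apply]
      have h2 := hmono.sum_smul_comp_perm_le_sum_smul (σ := ρb.symm * ρc)
      rw [h0]
      calc ∑ i : Fin n, d i * b (ρc i) = ∑ i : Fin n, d i • B ((ρb.symm * ρc) i) := by
            refine Finset.sum_congr rfl fun i _ => ?_
            rw [h1 i, smul_eq_mul]
        _ ≤ ∑ i : Fin n, d i • B i := h2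
        _ = ∑ i : Fin n, d i * B i := by simp [smul_eq_mul]
    -- conclude
    set τ : Equiv.Perm (Fin n) := ρa * ρc.symm with hτ
    have hfinal : ∑ i : Fin n, d i * A i = f (a ∘ τ) := by
      rw [hf_eq (a ∘ τ)]
      have := Equiv.sum_comp ρc.symm (fun j => c j * a (τ j))
      calc ∑ i : Fin n, d i * A i
          = ∑ i : Fin n, c (ρc i) * a (τ (ρc i)) := by
            refine Finset.sum_congr rfl fun i _ => ?_
            show c (ρc i) * a (ρa i) = c (ρc i) * a ((ρa * ρc.symm) (ρc i))
            rw [Equiv.Perm.mul_apply, Equiv.symm_apply_apply]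
        _ = ∑ j : Fin n, c j * a (τ j) := Equiv.sum_comp ρc (fun j => c j * a (τ j))
        _ = ∑ j : Fin n, (a ∘ τ) j * c j := Finset.sum_congr rfl fun j _ => mul_comm _ _
    have hmem : a ∘ τ ∈ K := subset_convexHull _ _ ⟨τ, rfl⟩
    have hlt := hfK _ hmem
    have hfb : f b = ∑ j : Fin n, b j * c j := hf_eq b
    have : f b ≤ f (a ∘ τ) := by
      rw [hfb, ← hfinal]
      calc ∑ j : Fin n, b j * c j = ∑ j : Fin n, c j * b j :=
            Finset.sum_congr rfl fun j _ => mul_comm _ _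
        _ ≤ ∑ i : Fin n, d i * B i := hrearr
        _ ≤ ∑ i : Fin n, d i * A i := hsorted
    linarith
  -- extract weights
  rw [hK, _root_.convexHull_eq] at hbK
  obtain ⟨ι, t, w, z, hw0, hw1, hz, hcm⟩ := hbK
  set P : ι → Equiv.Perm (Fin n) := fun i =>
    if h : ∃ p : Equiv.Perm (Fin n), a ∘ p = z i then h.choose else 1 with hP
  have haP : ∀ i ∈ t, a ∘ (P i) = z i := by
    intro i hi
    obtain ⟨p, hp⟩ := hz i hi
    have hex : ∃ p : Equiv.Perm (Fin n), a ∘ p = z i := ⟨p, hp⟩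
    simp only [hP, dif_pos hex]
    exact hex.choose_spec
  have hb_eq : b = ∑ i ∈ t, w i • z i := by
    rw [← hcm, Finset.centerMass_eq_of_sum_1 _ _ hw1]
  refine ⟨fun p => ∑ i ∈ t.filter (fun i => P i = p), w i, ?_, ?_, ?_⟩
  · intro p
    exact Finset.sum_nonneg fun i hi => hw0 i (Finset.mem_filter.1 hi).1
  · rw [Finset.sum_fiberwise_of_maps_to (fun i _ => Finset.mem_univ (P i)) w]
    exact hw1
  · intro j
    have hbj : b j = ∑ i ∈ t, w i * z i j := by
      rw [hb_eq]
      simp [smul_eq_mul]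
    rw [hbj, ← Finset.sum_fiberwise_of_maps_to (fun i _ => Finset.mem_univ (P i))
      (fun i => w i * z i j)]
    refine Finset.sum_congr rfl fun p _ => ?_
    rw [Finset.sum_mul]
    refine Finset.sum_congr rfl fun i hi => ?_
    obtain ⟨hit, hPi⟩ := Finset.mem_filter.1 hi
    have := haP i hit
    rw [← this, ← hPi]
    rfl

end Aux

section Analysis

private lemma iteratedDerivWithin_isOpen' {f : ℝ → ℝ} {s : Set ℝ} (hs : IsOpen s) {x : ℝ}
    (hx : x ∈ s) (m : ℕ) :
    iteratedDerivWithin m f s x = iteratedDeriv m f x := by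
  simp only [iteratedDerivWithin, iteratedDeriv, iteratedFDerivWithin_of_isOpen m hs hx]

private lemma cm_antitoneOn {Φ : ℝ → ℝ} (hΦ : CompletelyMonotone Φ) :
    AntitoneOn Φ (Set.Ioi 0) := by
  obtain ⟨hs, hpos, hsign⟩ := hΦ
  refine antitoneOn_of_deriv_nonpos (convex_Ioi 0) hs.continuousOn ?_ ?_
  · rw [interior_Ioi]
    exact hs.differentiableOn (by simp)
  · rw [interior_Ioi]
    intro x hx
    have h := hsign 1 x hx
    rw [iteratedDerivWithin_isOpen' isOpen_Ioi hx 1, iteratedDeriv_one] at h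
    linarith

private lemma cm_convexOn {Φ : ℝ → ℝ} (hΦ : CompletelyMonotone Φ) :
    ConvexOn ℝ (Set.Ioi 0) Φ := by
  obtain ⟨hs, hpos, hsign⟩ := hΦ
  refine convexOn_of_deriv2_nonneg (convex_Ioi 0) hs.continuousOn ?_ ?_ ?_ <;> rw [interior_Ioi]
  · exact hs.differentiableOn (by simp)
  · exact (hs.deriv_of_isOpen isOpen_Ioi (m := 1) (WithTop.coe_le_coe.2 le_top)).differentiableOn one_ne_zero
  · intro x hx
    have h := hsign 2 x hx
    rw [iteratedDerivWithin_isOpen' isOpen_Ioi hx 2, iteratedDeriv_eq_iterate] at h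
    simpa using h

/-- a measurable function agreeing with `Φ` on `(0, ∞)`. -/
private lemma exists_measurable_ext {Φ : ℝ → ℝ} (hΦ : ContinuousOn Φ (Set.Ioi 0)) :
    ∃ g : ℝ → ℝ, Measurable g ∧ ∀ x, 0 < x → g x = Φ x := by
  classical
  set v : ℝ → ℝ := fun x => if 0 < x then x else 1 with hv
  have hvmeas : Measurable v := Measurable.ite measurableSet_Ioi measurable_id measurable_const
  have hvpos : ∀ x, 0 < v x := by
    intro x; by_cases hx : 0 < x <;> simp [hv, hx]
  set h : ℝ → Set.Ioi (0:ℝ) := fun x => ⟨v x, hvpos x⟩ with hh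
  have hmeas : Measurable h := hvmeas.subtype_mk
  have hcont : Continuous ((Set.Ioi (0:ℝ)).restrict Φ) := hΦ.restrict
  refine ⟨fun x => if 0 < x then (Set.Ioi (0:ℝ)).restrict Φ (h x) else 0,
    Measurable.ite measurableSet_Ioi (hcont.measurable.comp hmeas) measurable_const, ?_⟩
  intro x hx
  simp [hh, hv, hx]
  rfl

end Analysis

section Prob

private lemma gammaMeasure_Iic_zero {γ : ℝ} : gammaMeasure γ 1 (Set.Iic 0) = 0 := by
  have h1 : gammaMeasure γ 1 (Set.Iio 0) = 0 := by
    rw [gammaMeasure, withDensity_apply _ measurableSet_Iio]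
    exact lintegral_gammaPDF_of_nonpos le_rfl
  have h2 : gammaMeasure γ 1 {(0:ℝ)} = 0 :=
    (withDensity_absolutelyContinuous volume (gammaPDF γ 1)) (by simp)
  have hsub : Set.Iic (0:ℝ) ⊆ Set.Iio 0 ∪ {0} := by
    intro x hx
    have hx' : x ≤ 0 := hx
    rcases lt_or_eq_of_le hx' with h | h
    · exact Or.inl h
    · exact Or.inr (by simp [h])
  refine le_antisymm ?_ (by positivity)
  calc gammaMeasure γ 1 (Set.Iic 0) ≤ gammaMeasure γ 1 (Set.Iio 0 ∪ {0}) := measure_mono hsub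
    _ ≤ gammaMeasure γ 1 (Set.Iio 0) + gammaMeasure γ 1 {(0:ℝ)} := measure_union_le _ _
    _ = 0 := by rw [h1, h2]; simp

end Prob

theorem schur_convex_uncentred_completely_monotone
    {Ω : Type*} [MeasurableSpace Ω] (μ : Measure Ω) [IsProbabilityMeasure μ]
    (γ : ℝ) (hγ : 0 < γ) (n : ℕ) (hn : 0 < n)
    (X : Fin n → Ω → ℝ) (hXmeas : ∀ j, Measurable (X j))
    (hXindep : iIndepFun X μ)
    (hXdist : ∀ j, μ.map (X j) = gammaMeasure γ 1)
    (Φ : ℝ → ℝ) (hΦ : CompletelyMonotone Φ)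
    (a b : Fin n → ℝ) (ha : ∀ j, 0 ≤ a j) (hb : ∀ j, 0 ≤ b j)
    (hmaj : Majorizes a b) :
    ∫⁻ ω, ENNReal.ofReal (Φ (∑ j, Real.sqrt (b j) * X j ω)) ∂μ
      ≤ ∫⁻ ω, ENNReal.ofReal (Φ (∑ j, Real.sqrt (a j) * X j ω)) ∂μ := by
  classical
  have hanti : AntitoneOn Φ (Set.Ioi 0) := cm_antitoneOn hΦ
  have hconv : ConvexOn ℝ (Set.Ioi 0) Φ := cm_convexOn hΦ
  have hΦpos : ∀ x : ℝ, 0 < x → 0 < Φ x := fun x hx => hΦ.2.1 x hx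
  obtain ⟨g, hgmeas, hgΦ⟩ := exists_measurable_ext hΦ.1.continuousOn
  by_cases hA : ∑ j, a j = 0
  · have ha0 : ∀ j, a j = 0 := fun j =>
      (Finset.sum_eq_zero_iff_of_nonneg (fun j _ => ha j)).1 hA j (Finset.mem_univ j)
    have hB0 : ∑ j, b j = 0 := hmaj.2 ▸ hA
    have hb0 : ∀ j, b j = 0 := fun j =>
      (Finset.sum_eq_zero_iff_of_nonneg (fun j _ => hb j)).1 hB0 j (Finset.mem_univ j)
    refine le_of_eq (lintegral_congr fun ω => ?_)
    simp [ha0, hb0]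
  -- main case
  have hApos : 0 < ∑ j, a j :=
    lt_of_le_of_ne (Finset.sum_nonneg fun j _ => ha j) (Ne.symm hA)
  have hBpos : 0 < ∑ j, b j := hmaj.2 ▸ hApos
  obtain ⟨j0, hj0⟩ : ∃ j, 0 < a j := by
    by_contra h; push_neg at h
    have : ∑ j, a j ≤ 0 := Finset.sum_nonpos fun j _ => h j
    linarith
  obtain ⟨j1, hj1⟩ : ∃ j, 0 < b j := by
    by_contra h; push_neg at h
    have : ∑ j, b j ≤ 0 := Finset.sum_nonpos fun j _ => h j
    linarith
  obtain ⟨w, hw0, hw1, hwb⟩ := majorizes_exists_weights hn a b hmaj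
  obtain ⟨p0, hp0⟩ : ∃ p : Equiv.Perm (Fin n), 0 < w p := by
    by_contra h; push_neg at h
    have : ∑ p : Equiv.Perm (Fin n), w p ≤ 0 := Finset.sum_nonpos fun p _ => h p
    rw [hw1] at this; linarith
  -- names for the sums
  set Sb : Ω → ℝ := fun ω => ∑ j, Real.sqrt (b j) * X j ω with hSb
  set Sa : Ω → ℝ := fun ω => ∑ j, Real.sqrt (a j) * X j ω with hSa
  set Sp : Equiv.Perm (Fin n) → Ω → ℝ := fun p ω => ∑ j, Real.sqrt (a (p j)) * X j ω with hSp
  -- almost sure positivity of the gamma variables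
  have hXpos : ∀ᵐ ω ∂μ, ∀ j, 0 < X j ω := by
    rw [MeasureTheory.ae_all_iff]
    intro j
    rw [ae_iff]
    have hset : {ω | ¬ 0 < X j ω} = X j ⁻¹' (Set.Iic 0) := by ext ω; simp [not_lt]
    rw [hset, ← Measure.map_apply (hXmeas j) measurableSet_Iic, hXdist j]
    exact gammaMeasure_Iic_zero
  -- pointwise positivity consequences
  have hSp_pos : ∀ (p : Equiv.Perm (Fin n)) ω, (∀ j, 0 < X j ω) → 0 < Sp p ω := by
    intro p ω hω
    refine Finset.sum_pos' (fun j _ => mul_nonneg (Real.sqrt_nonneg _) (hω j).le)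
      ⟨p.symm j0, Finset.mem_univ _, ?_⟩
    have h1 : 0 < Real.sqrt (a (p (p.symm j0))) := by
      rw [Equiv.apply_symm_apply]
      exact Real.sqrt_pos.2 hj0
    exact mul_pos h1 (hω _)
  have hSb_pos : ∀ ω, (∀ j, 0 < X j ω) → 0 < Sb ω := by
    intro ω hω
    refine Finset.sum_pos' (fun j _ => mul_nonneg (Real.sqrt_nonneg _) (hω j).le)
      ⟨j1, Finset.mem_univ _, mul_pos (Real.sqrt_pos.2 hj1) (hω _)⟩
  have hSa_pos : ∀ ω, (∀ j, 0 < X j ω) → 0 < Sa ω := by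
    intro ω hω
    refine Finset.sum_pos' (fun j _ => mul_nonneg (Real.sqrt_nonneg _) (hω j).le)
      ⟨j0, Finset.mem_univ _, mul_pos (Real.sqrt_pos.2 hj0) (hω _)⟩
  -- the coefficientwise Jensen inequality for sqrt
  have hc : ∀ j, (∑ p : Equiv.Perm (Fin n), w p * Real.sqrt (a (p j))) ≤ Real.sqrt (b j) := by
    intro j
    have hcon := (Real.strictConcaveOn_sqrt).concaveOn
    have hj := hcon.le_map_sum (t := Finset.univ) (w := w) (p := fun p : Equiv.Perm (Fin n) => a (p j))
      (fun p _ => hw0 p) hw1 (fun p _ => Set.mem_Ici.2 (ha _))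
    simp only [smul_eq_mul] at hj
    have hbj : ∑ p : Equiv.Perm (Fin n), w p * a (p j) = b j := (hwb j).symm
    rwa [hbj] at hj
  -- swap sums
  have hswap : ∀ ω, ∑ p : Equiv.Perm (Fin n), w p * Sp p ω
      = ∑ j, (∑ p : Equiv.Perm (Fin n), w p * Real.sqrt (a (p j))) * X j ω := by
    intro ω
    calc ∑ p : Equiv.Perm (Fin n), w p * Sp p ω
        = ∑ p : Equiv.Perm (Fin n), ∑ j, w p * (Real.sqrt (a (p j)) * X j ω) :=
          Finset.sum_congr rfl fun p _ => Finset.mul_sum _ _ _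
      _ = ∑ j, ∑ p : Equiv.Perm (Fin n), w p * (Real.sqrt (a (p j)) * X j ω) :=
          Finset.sum_comm
      _ = ∑ j, (∑ p : Equiv.Perm (Fin n), w p * Real.sqrt (a (p j))) * X j ω := by
          refine Finset.sum_congr rfl fun j _ => ?_
          rw [Finset.sum_mul]
          exact Finset.sum_congr rfl fun p _ => (mul_assoc _ _ _).symm
  -- pointwise inequality
  have hptwise : ∀ᵐ ω ∂μ, ENNReal.ofReal (g (Sb ω))
      ≤ ∑ p : Equiv.Perm (Fin n), ENNReal.ofReal (w p) * ENNReal.ofReal (g (Sp p ω)) := by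
    filter_upwards [hXpos] with ω hω
    have hmix_pos : 0 < ∑ p : Equiv.Perm (Fin n), w p * Sp p ω :=
      Finset.sum_pos' (fun p _ => mul_nonneg (hw0 p) (hSp_pos p ω hω).le)
        ⟨p0, Finset.mem_univ _, mul_pos hp0 (hSp_pos p0 ω hω)⟩
    have hmix_le : ∑ p : Equiv.Perm (Fin n), w p * Sp p ω ≤ Sb ω := by
      rw [hswap ω]
      exact Finset.sum_le_sum fun j _ =>
        mul_le_mul_of_nonneg_right (hc j) (hω j).le
    have key1 : Φ (Sb ω) ≤ Φ (∑ p : Equiv.Perm (Fin n), w p * Sp p ω) :=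
      hanti hmix_pos (hSb_pos ω hω) hmix_le
    have key2 : Φ (∑ p : Equiv.Perm (Fin n), w p * Sp p ω)
        ≤ ∑ p : Equiv.Perm (Fin n), w p * Φ (Sp p ω) := by
      have := hconv.map_sum_le (t := Finset.univ) (w := w)
        (p := fun p : Equiv.Perm (Fin n) => Sp p ω)
        (fun p _ => hw0 p) hw1 (fun p _ => hSp_pos p ω hω)
      simpa only [smul_eq_mul] using this
    have key : Φ (Sb ω) ≤ ∑ p : Equiv.Perm (Fin n), w p * Φ (Sp p ω) := key1.trans key2
    have hgb : g (Sb ω) = Φ (Sb ω) := hgΦ _ (hSb_pos ω hω)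
    have hgp : ∀ p : Equiv.Perm (Fin n), g (Sp p ω) = Φ (Sp p ω) :=
      fun p => hgΦ _ (hSp_pos p ω hω)
    calc ENNReal.ofReal (g (Sb ω)) ≤
        ENNReal.ofReal (∑ p : Equiv.Perm (Fin n), w p * Φ (Sp p ω)) := by
          rw [hgb]; exact ENNReal.ofReal_le_ofReal key
      _ = ∑ p : Equiv.Perm (Fin n), ENNReal.ofReal (w p * Φ (Sp p ω)) :=
          ENNReal.ofReal_sum_of_nonneg fun p _ =>
            mul_nonneg (hw0 p) (hΦpos _ (hSp_pos p ω hω)).le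
      _ = ∑ p : Equiv.Perm (Fin n), ENNReal.ofReal (w p) * ENNReal.ofReal (g (Sp p ω)) := by
          refine Finset.sum_congr rfl fun p _ => ?_
          rw [ENNReal.ofReal_mul (hw0 p), hgp p]
  -- measurability
  have hmeasS : ∀ (cf : Fin n → ℝ), Measurable fun ω => ∑ j, cf j * X j ω :=
    fun cf => Finset.measurable_sum _ fun j _ => (hXmeas j).const_mul (cf j)
  have hmeasG : ∀ (cf : Fin n → ℝ),
      Measurable (fun x : Fin n → ℝ => ENNReal.ofReal (g (∑ j, cf j * x j))) := by
    intro cf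
    exact ENNReal.measurable_ofReal.comp (hgmeas.comp
      (Finset.measurable_sum _ fun j _ => by fun_prop))
  -- product measure
  haveI hgam : IsProbabilityMeasure (gammaMeasure γ 1) := isProbabilityMeasure_gammaMeasure hγ one_pos
  set ν : Measure (Fin n → ℝ) := Measure.pi (fun _ => gammaMeasure γ 1) with hν
  set F : Ω → (Fin n → ℝ) := fun ω j => X j ω with hF
  have hFmeas : Measurable F := measurable_pi_lambda _ hXmeas
  have hT : ν = μ.map F := by
    refine Measure.pi_eq fun s hs => ?_
    rw [Measure.map_apply hFmeas (MeasurableSet.univ_pi hs)]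
    have hpre : F ⁻¹' (Set.univ.pi s) = ⋂ j ∈ (Finset.univ : Finset (Fin n)), X j ⁻¹' s j := by
      ext ω; simp [Set.mem_pi, hF]
    rw [hpre, hXindep.measure_inter_preimage_eq_mul Finset.univ (fun i _ => hs i)]
    refine Finset.prod_congr rfl fun j _ => ?_
    rw [← Measure.map_apply (hXmeas j) (hs j), hXdist j]
  have htransfer : ∀ (G : (Fin n → ℝ) → ENNReal), Measurable G →
      ∫⁻ ω, G (F ω) ∂μ = ∫⁻ x, G x ∂ν := by
    intro G hG
    rw [hT, lintegral_map hG hFmeas]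
  -- permutation invariance
  have hperm : ∀ p : Equiv.Perm (Fin n),
      ∫⁻ x, ENNReal.ofReal (g (∑ j, Real.sqrt (a (p j)) * x j)) ∂ν
        = ∫⁻ x, ENNReal.ofReal (g (∑ j, Real.sqrt (a j) * x j)) ∂ν := by
    intro p
    have hmp := measurePreserving_piCongrLeft (fun _ : Fin n => gammaMeasure γ 1)
      (p : Fin n ≃ Fin n)
    have hcomp := hmp.lintegral_comp (hmeasG (fun j => Real.sqrt (a j)))
    rw [hν, ← hcomp]
    refine lintegral_congr fun x => ?_
    have h1 : ∀ i, (MeasurableEquiv.piCongrLeft (fun _ : Fin n => ℝ) p) x (p i) = x i :=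
      fun i => MeasurableEquiv.piCongrLeft_apply_apply (β := fun _ : Fin n => ℝ) p x i
    congr 2
    symm
    calc ∑ j, Real.sqrt (a j) * (MeasurableEquiv.piCongrLeft (fun _ : Fin n => ℝ) p) x j
        = ∑ i, Real.sqrt (a (p i))
            * (MeasurableEquiv.piCongrLeft (fun _ : Fin n => ℝ) p) x (p i) :=
          (Equiv.sum_comp p
            (fun j => Real.sqrt (a j)
              * (MeasurableEquiv.piCongrLeft (fun _ : Fin n => ℝ) p) x j)).symm
      _ = ∑ i, Real.sqrt (a (p i)) * x i := by
          exact Finset.sum_congr rfl fun i _ => by rw [h1 i]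
  -- the common value of the permuted integrals
  have hval : ∀ p : Equiv.Perm (Fin n),
      ∫⁻ ω, ENNReal.ofReal (g (Sp p ω)) ∂μ = ∫⁻ ω, ENNReal.ofReal (g (Sa ω)) ∂μ := by
    intro p
    have h1 := htransfer _ (hmeasG (fun j => Real.sqrt (a (p j))))
    have h2 := htransfer _ (hmeasG (fun j => Real.sqrt (a j)))
    calc ∫⁻ ω, ENNReal.ofReal (g (Sp p ω)) ∂μ
        = ∫⁻ x, ENNReal.ofReal (g (∑ j, Real.sqrt (a (p j)) * x j)) ∂ν := h1
      _ = ∫⁻ x, ENNReal.ofReal (g (∑ j, Real.sqrt (a j) * x j)) ∂ν := hperm p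
      _ = ∫⁻ ω, ENNReal.ofReal (g (Sa ω)) ∂μ := h2.symm
  -- putting everything together
  have hend_b : ∫⁻ ω, ENNReal.ofReal (Φ (Sb ω)) ∂μ = ∫⁻ ω, ENNReal.ofReal (g (Sb ω)) ∂μ := by
    refine lintegral_congr_ae ?_
    filter_upwards [hXpos] with ω hω
    rw [hgΦ _ (hSb_pos ω hω)]
  have hend_a : ∫⁻ ω, ENNReal.ofReal (Φ (Sa ω)) ∂μ = ∫⁻ ω, ENNReal.ofReal (g (Sa ω)) ∂μ := by
    refine lintegral_congr_ae ?_
    filter_upwards [hXpos] with ω hω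
    rw [hgΦ _ (hSa_pos ω hω)]
  rw [hend_b, hend_a]
  calc ∫⁻ ω, ENNReal.ofReal (g (Sb ω)) ∂μ
      ≤ ∫⁻ ω, ∑ p : Equiv.Perm (Fin n), ENNReal.ofReal (w p)
          * ENNReal.ofReal (g (Sp p ω)) ∂μ := lintegral_mono_ae hptwise
    _ = ∑ p : Equiv.Perm (Fin n), ∫⁻ ω, ENNReal.ofReal (w p)
          * ENNReal.ofReal (g (Sp p ω)) ∂μ := by
        refine lintegral_finset_sum _ fun p _ => ?_
        exact (ENNReal.measurable_ofReal.comp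
          (hgmeas.comp (hmeasS (fun j => Real.sqrt (a (p j)))))).const_mul _
    _ = ∑ p : Equiv.Perm (Fin n), ENNReal.ofReal (w p)
          * ∫⁻ ω, ENNReal.ofReal (g (Sp p ω)) ∂μ := by
        refine Finset.sum_congr rfl fun p _ => ?_
        exact lintegral_const_mul _ (ENNReal.measurable_ofReal.comp
          (hgmeas.comp (hmeasS (fun j => Real.sqrt (a (p j))))))
    _ = ∑ p : Equiv.Perm (Fin n), ENNReal.ofReal (w p)
          * ∫⁻ ω, ENNReal.ofReal (g (Sa ω)) ∂μ := by
        refine Finset.sum_congr rfl fun p _ => ?_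
        rw [hval p]
    _ = ∫⁻ ω, ENNReal.ofReal (g (Sa ω)) ∂μ := by
        rw [← Finset.sum_mul, ← ENNReal.ofReal_sum_of_nonneg (fun p _ => hw0 p), hw1]
        simp
end

section
/- Let γ > 0, let n and k be positive integers, and let X₁,…,Xₙ be independent random variables each with the Gamma(γ) distribution. If a = (a₁,…,aₙ) and b = (b₁,…,bₙ) are vectors of nonnegative reals such that a majorizes b, then E(Σⱼ √aⱼ (Xⱼ − γ))^k ≥ E(Σⱼ √bⱼ (Xⱼ − γ))^k. -/
section Algebra
variable (γ : ℝ) (r : ℕ → ℝ)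

noncomputable def phiSeq (m : ℕ) : ℝ :=
  ∑ i ∈ Finset.range (m+1), (m.choose i : ℝ) * (-γ)^(m-i) * r i

noncomputable def psiSeq (m : ℕ) : ℝ :=
  ∑ i ∈ Finset.range (m+1), (m.choose i : ℝ) * (-γ)^(m-i) * r (i+1)

lemma phi_succ (m : ℕ) : phiSeq γ r (m+1) = psiSeq γ r m + (-γ) * phiSeq γ r m := by
  have h1 : phiSeq γ r (m+1)
      = (∑ i ∈ Finset.range (m+1), ((m+1).choose (i+1) : ℝ) * (-γ)^(m-i) * r (i+1))
        + ((m+1).choose 0 : ℝ) * (-γ)^(m+1) * r 0 := by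
    rw [phiSeq, Finset.sum_range_succ']
    simp [Nat.succ_sub_succ]
  have h2 : ∀ i ∈ Finset.range (m+1), ((m+1).choose (i+1) : ℝ) * (-γ)^(m-i) * r (i+1)
      = (m.choose i : ℝ) * (-γ)^(m-i) * r (i+1) + (m.choose (i+1) : ℝ) * (-γ)^(m-i) * r (i+1) := by
    intro i hi
    rw [Nat.choose_succ_succ]
    push_cast
    ring
  rw [h1, Finset.sum_congr rfl h2, Finset.sum_add_distrib]
  have h3 : (-γ) * phiSeq γ r m
      = (∑ i ∈ Finset.range m, (m.choose (i+1) : ℝ) * (-γ)^(m-i) * r (i+1))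
        + (m.choose 0 : ℝ) * (-γ)^(m+1) * r 0 := by
    rw [phiSeq, Finset.mul_sum, Finset.sum_range_succ']
    congr 1
    · apply Finset.sum_congr rfl
      intro i hi
      simp only [Finset.mem_range] at hi
      have : m - i = (m - (i+1)) + 1 := by omega
      rw [this]
      ring
    · simp
      ring
  have h4 : ∑ i ∈ Finset.range (m+1), (m.choose (i+1) : ℝ) * (-γ)^(m-i) * r (i+1)
      = ∑ i ∈ Finset.range m, (m.choose (i+1) : ℝ) * (-γ)^(m-i) * r (i+1) := by
    rw [Finset.sum_range_succ, Nat.choose_succ_self]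
    simp
  rw [h4, h3, psiSeq]
  simp only [Nat.choose_zero_right, Nat.cast_one]
  ring

end Algebra

section Algebra2
variable {γ : ℝ} {r : ℕ → ℝ}

lemma psi_eq (hr : ∀ i, r (i+1) = (γ + i) * r i) (m : ℕ) : psiSeq γ r m
    = γ * phiSeq γ r m + ∑ i ∈ Finset.range (m+1), (i : ℝ) * (m.choose i : ℝ) * (-γ)^(m-i) * r i := by
  rw [psiSeq, phiSeq, Finset.mul_sum, ← Finset.sum_add_distrib]
  apply Finset.sum_congr rfl
  intro i _
  rw [hr i]
  ring

lemma S_eq (m : ℕ) :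
    ∑ i ∈ Finset.range (m+2), (i : ℝ) * ((m+1).choose i : ℝ) * (-γ)^(m+1-i) * r i
      = ((m:ℝ)+1) * psiSeq γ r m := by
  rw [Finset.sum_range_succ', psiSeq, Finset.mul_sum]
  simp only [Nat.cast_zero, zero_mul, add_zero]
  apply Finset.sum_congr rfl
  intro i _
  have hc : (((m+1).choose (i+1) : ℕ) : ℝ) * ((i:ℝ)+1) = ((m:ℝ)+1) * (m.choose i : ℝ) := by
    exact_mod_cast (Nat.add_one_mul_choose_eq m i).symm
  have hsub : m + 1 - (i + 1) = m - i := by omega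
  rw [hsub]
  push_cast
  linear_combination ((-γ)^(m-i) * r (i+1)) * hc

lemma phi_rec (hr : ∀ i, r (i+1) = (γ + i) * r i) (m : ℕ) :
    phiSeq γ r (m+2) = ((m:ℝ)+1) * (phiSeq γ r (m+1) + γ * phiSeq γ r m) := by
  have a1 := phi_succ γ r (m+1)
  have a0 := phi_succ γ r m
  have b1 := psi_eq hr (m+1)
  have c1 := S_eq (γ := γ) (r := r) m
  rw [c1] at b1
  have : phiSeq γ r (m+2) = psiSeq γ r (m+1) + -γ * phiSeq γ r (m+1) := a1
  rw [this, b1]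
  linear_combination (-(m:ℝ)-1) * a0

lemma phi_zero : phiSeq γ r 0 = r 0 := by simp [phiSeq]

lemma phi_one : phiSeq γ r 1 = r 1 - γ * r 0 := by
  simp [phiSeq, Finset.sum_range_succ]
  ring

end Algebra2

section Qdef

/-- centred moments of Gamma(γ), defined by recursion -/
noncomputable def cmom (γ : ℝ) : ℕ → ℝ
  | 0 => 1
  | 1 => 0
  | (m+2) => ((m:ℝ)+1) * (cmom γ (m+1) + γ * cmom γ m)

lemma cmom_nonneg {γ : ℝ} (hγ : 0 ≤ γ) : ∀ m, 0 ≤ cmom γ m := by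
  intro m
  induction m using Nat.strong_induction_on with
  | _ m ih =>
    match m with
    | 0 => simp [cmom]
    | 1 => simp [cmom]
    | (m+2) =>
      have h1 := ih (m+1) (by omega)
      have h0 := ih m (by omega)
      have : (0:ℝ) ≤ (m:ℝ)+1 := by positivity
      simp only [cmom]
      have : 0 ≤ cmom γ (m+1) + γ * cmom γ m := by positivity
      positivity

noncomputable def Qseq (γ : ℝ) (p : ℕ → ℝ) : ℕ → ℝ
  | 0 => 1
  | (k+1) => γ * ∑ i ∈ Finset.range k, (k.descFactorial (i+1) : ℝ) * p (i+2) * Qseq γ p (k - 1 - i)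
  decreasing_by omega

lemma Qseq_mono {γ : ℝ} {p q : ℕ → ℝ} (hγ : 0 ≤ γ)
    (hq : ∀ s, 2 ≤ s → 0 ≤ q s) (hpq : ∀ s, 2 ≤ s → q s ≤ p s) :
    ∀ k, 0 ≤ Qseq γ q k ∧ Qseq γ q k ≤ Qseq γ p k := by
  intro k
  induction k using Nat.strong_induction_on with
  | _ k ih =>
    match k with
    | 0 => simp [Qseq]
    | (k+1) =>
      have hterm : ∀ m ∈ Finset.range k,
          0 ≤ (k.descFactorial (m+1) : ℝ) * q (m+2) * Qseq γ q (k - 1 - m) ∧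
          (k.descFactorial (m+1) : ℝ) * q (m+2) * Qseq γ q (k - 1 - m)
            ≤ (k.descFactorial (m+1) : ℝ) * p (m+2) * Qseq γ p (k - 1 - m) := by
        intro m hm
        simp only [Finset.mem_range] at hm
        have h2 : 2 ≤ m + 2 := by omega
        have hihm := ih (k - 1 - m) (by omega)
        have hq' := hq _ h2
        have hp' : 0 ≤ p (m+2) := le_trans hq' (hpq _ h2)
        constructor
        · exact mul_nonneg (mul_nonneg (by positivity) hq') hihm.1
        · apply mul_le_mul
          · apply mul_le_mul_of_nonneg_left (hpq _ h2) (by positivity)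
          · exact hihm.2
          · exact hihm.1
          · exact mul_nonneg (by positivity) hp'
      constructor
      · simp only [Qseq]
        apply mul_nonneg hγ
        exact Finset.sum_nonneg (fun m hm => (hterm m hm).1)
      · simp only [Qseq]
        apply mul_le_mul_of_nonneg_left _ hγ
        exact Finset.sum_le_sum (fun m hm => (hterm m hm).2)

end Qdef

section P2
open MeasureTheory Set

section Hinge

lemma hinge_integrable {q x : ℝ} (hq : 1 < q) (hx : 0 ≤ x) :
    IntegrableOn (fun t : ℝ => t ^ (q-2) * max (x - t) 0) (Ioi 0) := by
  rcases eq_or_lt_of_le hx with h | h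
  · apply (integrableOn_congr_fun _ measurableSet_Ioi).mpr (integrableOn_zero (s := Ioi 0))
    intro t ht
    simp only [mem_Ioi] at ht
    have : max (x - t) 0 = 0 := max_eq_right (by linarith)
    simp [this]
  · have h1 : IntegrableOn (fun t : ℝ => t ^ (q-2) * max (x - t) 0) (Ioc 0 x) := by
      have hg1 : IntegrableOn (fun t : ℝ => x * t ^ (q-2) - t ^ (q-1)) (Ioc 0 x) := by
        apply Integrable.sub
        · have := (intervalIntegral.intervalIntegrable_rpow' (a := 0) (b := x)
            (r := q-2) (by linarith)).const_mul x
          rwa [intervalIntegrable_iff, uIoc_of_le hx] at this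
        · have := intervalIntegral.intervalIntegrable_rpow' (a := 0) (b := x)
            (r := q-1) (by linarith)
          rwa [intervalIntegrable_iff, uIoc_of_le hx] at this
      apply (integrableOn_congr_fun _ measurableSet_Ioc).mpr hg1
      intro t ht
      simp only [mem_Ioc] at ht
      have hmax : max (x - t) 0 = x - t := max_eq_left (by linarith)
      show t ^ (q-2) * max (x - t) 0 = x * t ^ (q-2) - t ^ (q-1)
      have ht1 : t ^ (q-1) = t ^ (q-2) * t := by
        have e : q - 1 = q - 2 + 1 := by ring
        rw [e, Real.rpow_add_one (ne_of_gt ht.1)]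
      rw [hmax, ht1]
      ring
    have h2 : IntegrableOn (fun t : ℝ => t ^ (q-2) * max (x - t) 0) (Ioi x) := by
      apply (integrableOn_congr_fun _ measurableSet_Ioi).mpr (integrableOn_zero (s := Ioi x))
      intro t ht
      simp only [mem_Ioi] at ht
      have : max (x - t) 0 = 0 := max_eq_right (by linarith)
      simp [this]
    have := h1.union h2
    rwa [Ioc_union_Ioi_eq_Ioi hx] at this

lemma hinge_repr {q x : ℝ} (hq : 1 < q) (hx : 0 ≤ x) :
    x ^ q = q * (q-1) * ∫ t in Ioi (0:ℝ), t ^ (q-2) * max (x - t) 0 := by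
  rcases eq_or_lt_of_le hx with h | h
  · have : ∫ t in Ioi (0:ℝ), t ^ (q-2) * max (x - t) 0 = 0 := by
      apply setIntegral_eq_zero_of_forall_eq_zero
      intro t ht
      simp only [mem_Ioi] at ht
      have : max (x - t) 0 = 0 := max_eq_right (by linarith)
      simp [this]
    rw [this, ← h, Real.zero_rpow (by linarith)]
    ring
  · have key : ∫ t in Ioi (0:ℝ), t ^ (q-2) * max (x - t) 0 = x ^ q / (q * (q-1)) := by
      have hsplit : ∫ t in Ioi (0:ℝ), t ^ (q-2) * max (x - t) 0
          = (∫ t in Ioc (0:ℝ) x, t ^ (q-2) * max (x - t) 0)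
            + ∫ t in Ioi x, t ^ (q-2) * max (x - t) 0 := by
        rw [← setIntegral_union (Set.Ioc_disjoint_Ioi le_rfl) measurableSet_Ioi
          ((hinge_integrable hq hx).mono_set (by rw [← Ioc_union_Ioi_eq_Ioi hx]; exact subset_union_left))
          ((hinge_integrable hq hx).mono_set (by rw [← Ioc_union_Ioi_eq_Ioi hx]; exact subset_union_right)),
          Ioc_union_Ioi_eq_Ioi hx]
      have hzero : ∫ t in Ioi x, t ^ (q-2) * max (x - t) 0 = 0 := by
        apply setIntegral_eq_zero_of_forall_eq_zero
        intro t ht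
        simp only [mem_Ioi] at ht
        have : max (x - t) 0 = 0 := max_eq_right (by linarith)
        simp [this]
      have hmain : ∫ t in Ioc (0:ℝ) x, t ^ (q-2) * max (x - t) 0
          = x * (x ^ (q-1) / (q-1)) - x ^ q / q := by
        have hcongr : ∫ t in Ioc (0:ℝ) x, t ^ (q-2) * max (x - t) 0
            = ∫ t in Ioc (0:ℝ) x, (x * t ^ (q-2) - t ^ (q-1)) := by
          apply setIntegral_congr_fun measurableSet_Ioc
          intro t ht
          simp only [mem_Ioc] at ht
          have hmax : max (x - t) 0 = x - t := max_eq_left (by linarith)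
          show t ^ (q-2) * max (x - t) 0 = x * t ^ (q-2) - t ^ (q-1)
          have ht1 : t ^ (q-1) = t ^ (q-2) * t := by
            have e : q - 1 = q - 2 + 1 := by ring
            rw [e, Real.rpow_add_one (ne_of_gt ht.1)]
          rw [hmax, ht1]
          ring
        rw [hcongr, ← intervalIntegral.integral_of_le hx]
        have i1 : IntervalIntegrable (fun t : ℝ => t ^ (q-2)) volume 0 x :=
          intervalIntegral.intervalIntegrable_rpow' (by linarith)
        have i2 : IntervalIntegrable (fun t : ℝ => t ^ (q-1)) volume 0 x :=
          intervalIntegral.intervalIntegrable_rpow' (by linarith)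
        rw [intervalIntegral.integral_sub (i1.const_mul x) i2,
          intervalIntegral.integral_const_mul, integral_rpow (Or.inl (by linarith : (-1:ℝ) < q-2)),
          integral_rpow (Or.inl (by linarith : (-1:ℝ) < q-1))]
        rw [Real.zero_rpow (by linarith : q-2+1 ≠ 0), Real.zero_rpow (by linarith : q-1+1 ≠ 0)]
        have e1 : q - 2 + 1 = q - 1 := by ring
        have e2 : q - 1 + 1 = q := by ring
        rw [e1, e2]
        ring
      rw [hsplit, hzero, hmain, add_zero]
      have hxq : x * x ^ (q-1) = x ^ q := by
        rw [mul_comm, ← Real.rpow_add_one (ne_of_gt h)]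
        ring_nf
      have hq0 : q ≠ 0 := by linarith
      have hq1 : q - 1 ≠ 0 := by linarith
      have e3 : x * (x ^ (q-1) / (q-1)) = x ^ q / (q-1) := by
        rw [← mul_div_assoc, hxq]
      rw [e3]
      field_simp
      ring
    rw [key]
    have hq0 : q ≠ 0 := by linarith
    have hq1 : q - 1 ≠ 0 := by linarith
    field_simp

end Hinge

section Karamata
open Finset

lemma hinge_sum_le {n : ℕ} {a b : Fin n → ℝ}
    (hmaj : ∀ s : Finset (Fin n), ∃ t : Finset (Fin n),
      t.card = s.card ∧ ∑ j ∈ s, b j ≤ ∑ j ∈ t, a j)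
    (t : ℝ) : ∑ j, max (b j - t) 0 ≤ ∑ j, max (a j - t) 0 := by
  classical
  set u : Finset (Fin n) := Finset.univ.filter (fun j => t < b j) with hu
  have hbu : ∑ j, max (b j - t) 0 = ∑ j ∈ u, (b j - t) := by
    rw [hu, Finset.sum_filter]
    apply Finset.sum_congr rfl
    intro j _
    by_cases h : t < b j
    · simp [h, max_eq_left (by linarith : (0:ℝ) ≤ b j - t)]
    · simp [h, max_eq_right (by push_neg at h; linarith : b j - t ≤ (0:ℝ))]
  obtain ⟨v, hvcard, hvsum⟩ := hmaj u
  calc ∑ j, max (b j - t) 0 = ∑ j ∈ u, (b j - t) := hbu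
    _ = (∑ j ∈ u, b j) - u.card * t := by rw [Finset.sum_sub_distrib]; simp [mul_comm]
    _ ≤ (∑ j ∈ v, a j) - v.card * t := by rw [hvcard]; linarith
    _ = ∑ j ∈ v, (a j - t) := by rw [Finset.sum_sub_distrib]; simp [mul_comm]
    _ ≤ ∑ j ∈ v, max (a j - t) 0 := Finset.sum_le_sum (fun j _ => le_max_left _ _)
    _ ≤ ∑ j, max (a j - t) 0 := Finset.sum_le_sum_of_subset_of_nonneg
        (Finset.subset_univ v) (fun j _ _ => le_max_right _ _)

lemma sqrt_pow_eq_rpow {x : ℝ} (hx : 0 ≤ x) (s : ℕ) :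
    Real.sqrt x ^ s = x ^ ((s:ℝ)/2) := by
  rw [Real.sqrt_eq_rpow, ← Real.rpow_natCast (x ^ ((1:ℝ)/2)) s, ← Real.rpow_mul hx]
  congr 1
  ring

lemma powsum_le {n : ℕ} {a b : Fin n → ℝ} (ha : ∀ j, 0 ≤ a j) (hb : ∀ j, 0 ≤ b j)
    (hmaj1 : ∀ s : Finset (Fin n), ∃ t : Finset (Fin n),
      t.card = s.card ∧ ∑ j ∈ s, b j ≤ ∑ j ∈ t, a j)
    (hmaj2 : ∑ j, a j = ∑ j, b j)
    {s : ℕ} (hs : 2 ≤ s) :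
    ∑ j, Real.sqrt (b j) ^ s ≤ ∑ j, Real.sqrt (a j) ^ s := by
  rcases eq_or_lt_of_le hs with h2 | h3
  · subst h2
    have e1 : ∀ j, Real.sqrt (a j) ^ 2 = a j := fun j => Real.sq_sqrt (ha j)
    have e2 : ∀ j, Real.sqrt (b j) ^ 2 = b j := fun j => Real.sq_sqrt (hb j)
    simp only [e1, e2]
    exact le_of_eq hmaj2.symm
  · set q : ℝ := (s:ℝ)/2 with hqdef
    have hq : 1 < q := by
      have : (3:ℝ) ≤ (s:ℝ) := by exact_mod_cast h3
      rw [hqdef]; linarith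
    have hrw : ∀ (c : Fin n → ℝ), (∀ j, 0 ≤ c j) →
        ∑ j, Real.sqrt (c j) ^ s
          = q * (q-1) * ∫ t in Set.Ioi (0:ℝ), ∑ j, t ^ (q-2) * max (c j - t) 0 := by
      intro c hc
      rw [integral_finset_sum _ (fun j _ => hinge_integrable hq (hc j)), Finset.mul_sum]
      apply Finset.sum_congr rfl
      intro j _
      rw [sqrt_pow_eq_rpow (hc j), ← hqdef, hinge_repr hq (hc j)]
    rw [hrw a ha, hrw b hb]
    apply mul_le_mul_of_nonneg_left _ (by nlinarith : 0 ≤ q * (q-1))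
    apply setIntegral_mono_on
    · exact integrable_finset_sum _ (fun j _ => hinge_integrable hq (hb j))
    · exact integrable_finset_sum _ (fun j _ => hinge_integrable hq (ha j))
    · exact measurableSet_Ioi
    · intro t ht
      simp only [Set.mem_Ioi] at ht
      have htq : 0 ≤ t ^ (q-2) := Real.rpow_nonneg (le_of_lt ht) _
      calc ∑ j, t ^ (q-2) * max (b j - t) 0 = t ^ (q-2) * ∑ j, max (b j - t) 0 := by
            rw [Finset.mul_sum]
        _ ≤ t ^ (q-2) * ∑ j, max (a j - t) 0 :=
            mul_le_mul_of_nonneg_left (hinge_sum_le hmaj1 t) htq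
        _ = ∑ j, t ^ (q-2) * max (a j - t) 0 := by rw [Finset.mul_sum]

lemma powsum_nonneg {n : ℕ} (b : Fin n → ℝ) (s : ℕ) :
    0 ≤ ∑ j, Real.sqrt (b j) ^ s :=
  Finset.sum_nonneg (fun j _ => pow_nonneg (Real.sqrt_nonneg _) s)

end Karamata
end P2

section P3
open MeasureTheory ProbabilityTheory Real Set NNReal ENNReal

section GammaMoments
variable {γ : ℝ}

lemma gammaMeasure_eq_withDensity (γ : ℝ) :
    gammaMeasure γ 1 = volume.withDensity
      (fun x => ((Real.toNNReal (gammaPDFReal γ 1 x) : ℝ≥0) : ℝ≥0∞)) := rfl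

lemma gamma_pdf_mul_integrable (hγ : 0 < γ) (i : ℕ) :
    Integrable (fun x : ℝ => x ^ i * gammaPDFReal γ 1 x) volume := by
  rw [← integrableOn_univ, ← Set.Iio_union_Ici (a := (0:ℝ))]
  apply IntegrableOn.union
  · apply (integrableOn_congr_fun _ measurableSet_Iio).mpr (integrableOn_zero (s := Iio 0))
    intro x hx
    simp only [mem_Iio] at hx
    simp [gammaPDFReal, not_le.mpr hx]
  · rw [integrableOn_Ici_iff_integrableOn_Ioi]
    have hconv := (Real.GammaIntegral_convergent (s := γ + i) (by positivity)).const_mul (1 / Real.Gamma γ)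
    apply MeasureTheory.IntegrableOn.congr_fun hconv _ measurableSet_Ioi
    intro x hx
    simp only [mem_Ioi] at hx
    show (1 / Real.Gamma γ) * (Real.exp (-x) * x ^ (γ + (i:ℝ) - 1)) = x ^ i * gammaPDFReal γ 1 x
    rw [gammaPDFReal, if_pos (le_of_lt hx)]
    have hxpow : x ^ (γ + (i:ℝ) - 1) = x ^ (i:ℕ) * x ^ (γ - 1) := by
      rw [← Real.rpow_natCast x i, ← Real.rpow_add hx]
      congr 1
      ring
    rw [hxpow]
    simp only [Real.one_rpow, one_mul]
    ring

lemma gamma_integrable_pow (hγ : 0 < γ) (i : ℕ) :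
    Integrable (fun y : ℝ => y ^ i) (gammaMeasure γ 1) := by
  rw [gammaMeasure_eq_withDensity]
  rw [integrable_withDensity_iff (by measurability) (Filter.Eventually.of_forall (fun x => ENNReal.coe_lt_top))]
  apply (gamma_pdf_mul_integrable hγ i).congr
  apply Filter.Eventually.of_forall
  intro x
  simp [Real.coe_toNNReal _ (gammaPDFReal_nonneg hγ one_pos x), mul_comm]

lemma gamma_integral_pow (hγ : 0 < γ) (i : ℕ) :
    ∫ y, y ^ i ∂(gammaMeasure γ 1) = Real.Gamma (γ + i) / Real.Gamma γ := by
  rw [gammaMeasure_eq_withDensity, integral_withDensity_eq_integral_smul (by measurability)]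
  have hpt : ∀ x : ℝ, (Real.toNNReal (gammaPDFReal γ 1 x) : ℝ≥0) • (x ^ i)
      = x ^ i * gammaPDFReal γ 1 x := by
    intro x
    simp [NNReal.smul_def, Real.coe_toNNReal _ (gammaPDFReal_nonneg hγ one_pos x), mul_comm]
  simp only [hpt]
  rw [← integral_add_compl (measurableSet_Iio (a := (0:ℝ))) (gamma_pdf_mul_integrable hγ i)]
  have h1 : ∫ x in Iio (0:ℝ), x ^ i * gammaPDFReal γ 1 x = 0 := by
    apply setIntegral_eq_zero_of_forall_eq_zero
    intro x hx
    simp only [mem_Iio] at hx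
    simp [gammaPDFReal, not_le.mpr hx]
  have hcompl : (Iio (0:ℝ))ᶜ = Ici 0 := by simp
  rw [h1, zero_add, hcompl, integral_Ici_eq_integral_Ioi]
  have h2 : ∫ x in Ioi (0:ℝ), x ^ i * gammaPDFReal γ 1 x
      = ∫ x in Ioi (0:ℝ), (1 / Real.Gamma γ) * (Real.exp (-x) * x ^ (γ + i - 1)) := by
    apply setIntegral_congr_fun measurableSet_Ioi
    intro x hx
    simp only [mem_Ioi] at hx
    show x ^ i * gammaPDFReal γ 1 x = (1 / Real.Gamma γ) * (Real.exp (-x) * x ^ (γ + i - 1))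
    rw [gammaPDFReal, if_pos (le_of_lt hx)]
    have hxpow : x ^ (γ + (i:ℝ) - 1) = x ^ (i:ℕ) * x ^ (γ - 1) := by
      rw [← Real.rpow_natCast x i, ← Real.rpow_add hx]
      congr 1
      ring
    rw [hxpow]
    simp only [Real.one_rpow, one_mul]
    ring
  rw [h2, integral_const_mul, ← Real.Gamma_eq_integral (by positivity)]
  ring

lemma gamma_integral_pow_zero (hγ : 0 < γ) :
    ∫ y, y ^ 0 ∂(gammaMeasure γ 1) = 1 := by
  rw [gamma_integral_pow hγ 0]
  simp only [Nat.cast_zero, add_zero]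
  exact div_self (ne_of_gt (Real.Gamma_pos_of_pos hγ))

lemma gamma_integral_pow_succ (hγ : 0 < γ) (i : ℕ) :
    ∫ y, y ^ (i+1) ∂(gammaMeasure γ 1)
      = (γ + i) * ∫ y, y ^ i ∂(gammaMeasure γ 1) := by
  rw [gamma_integral_pow hγ, gamma_integral_pow hγ]
  have : γ + ((i:ℝ)+1) = (γ + i) + 1 := by ring
  push_cast
  rw [this, Real.Gamma_add_one (by positivity)]
  ring

end GammaMoments

section CentredMoments
open MeasureTheory ProbabilityTheory Real Set

variable {γ : ℝ}

/-- raw moments of the Gamma distribution -/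
noncomputable def Rmom (γ : ℝ) (i : ℕ) : ℝ := ∫ y, y ^ i ∂(gammaMeasure γ 1)

lemma Rmom_zero (hγ : 0 < γ) : Rmom γ 0 = 1 := gamma_integral_pow_zero hγ

lemma Rmom_succ (hγ : 0 < γ) (i : ℕ) : Rmom γ (i+1) = (γ + i) * Rmom γ i :=
  gamma_integral_pow_succ hγ i

lemma centred_expand (γ : ℝ) (t : ℕ) (y : ℝ) :
    (y - γ) ^ t = ∑ i ∈ Finset.range (t+1), y ^ i * ((-γ)^(t-i) * (t.choose i : ℝ)) := by
  have := add_pow y (-γ) t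
  rw [← sub_eq_add_neg] at this
  rw [this]
  apply Finset.sum_congr rfl
  intro i _
  ring

lemma gamma_integrable_centred (hγ : 0 < γ) (t : ℕ) :
    Integrable (fun y : ℝ => (y - γ) ^ t) (gammaMeasure γ 1) := by
  have : Integrable (fun y : ℝ =>
      ∑ i ∈ Finset.range (t+1), y ^ i * ((-γ)^(t-i) * (t.choose i : ℝ))) (gammaMeasure γ 1) :=
    integrable_finset_sum _ (fun i _ => (gamma_integrable_pow hγ i).mul_const _)
  apply this.congr
  filter_upwards with y
  rw [centred_expand]

lemma gamma_centred_eq_phi (hγ : 0 < γ) (t : ℕ) :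
    ∫ y, (y - γ) ^ t ∂(gammaMeasure γ 1) = phiSeq γ (Rmom γ) t := by
  have h1 : ∫ y, (y - γ) ^ t ∂(gammaMeasure γ 1)
      = ∫ y, (∑ i ∈ Finset.range (t+1), y ^ i * ((-γ)^(t-i) * (t.choose i : ℝ)))
          ∂(gammaMeasure γ 1) := by
    apply integral_congr_ae
    filter_upwards with y
    rw [centred_expand]
  rw [h1, integral_finset_sum _ (fun i _ => (gamma_integrable_pow hγ i).mul_const _)]
  rw [phiSeq]
  apply Finset.sum_congr rfl
  intro i _
  rw [integral_mul_const]
  show Rmom γ i * ((-γ)^(t-i) * (t.choose i : ℝ)) = _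
  ring

lemma gamma_centred_eq_cmom (hγ : 0 < γ) : ∀ t : ℕ,
    ∫ y, (y - γ) ^ t ∂(gammaMeasure γ 1) = cmom γ t := by
  have hr : ∀ i, Rmom γ (i+1) = (γ + i) * Rmom γ i := Rmom_succ hγ
  intro t
  induction t using Nat.strong_induction_on with
  | _ t ih =>
    match t with
    | 0 => rw [gamma_centred_eq_phi hγ, phi_zero, Rmom_zero hγ]; rfl
    | 1 =>
      rw [gamma_centred_eq_phi hγ, phi_one, hr 0, Rmom_zero hγ]
      norm_num [cmom]
    | (t+2) =>
      rw [gamma_centred_eq_phi hγ, phi_rec hr t]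
      show _ = cmom γ (t+2)
      rw [show cmom γ (t+2) = ((t:ℝ)+1) * (cmom γ (t+1) + γ * cmom γ t) from rfl]
      rw [← gamma_centred_eq_phi hγ, ← gamma_centred_eq_phi hγ,
        ih (t+1) (by omega), ih t (by omega)]

end CentredMoments
end P3

section P4
open MeasureTheory ProbabilityTheory Real

noncomputable def piGamma (γ : ℝ) (n : ℕ) : Measure (Fin n → ℝ) :=
  Measure.pi (fun _ => gammaMeasure γ 1)

noncomputable def Sfun (γ : ℝ) {n : ℕ} (c : Fin n → ℝ) (x : Fin n → ℝ) : ℝ :=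
  ∑ j, c j * (x j - γ)

section ProdDecomp
variable {γ : ℝ} (hγ : 0 < γ)

lemma gammaProb (hγ : 0 < γ) : IsProbabilityMeasure (gammaMeasure γ 1) :=
  isProbabilityMeasure_gammaMeasure hγ one_pos

lemma piGammaProb (hγ : 0 < γ) (n : ℕ) : IsProbabilityMeasure (piGamma γ n) := by
  haveI := gammaProb hγ
  exact MeasureTheory.Measure.pi.instIsProbabilityMeasure _

lemma prod_decomp_integrable (hγ : 0 < γ) {n : ℕ} (j : Fin (n+1)) {g : ℝ → ℝ}
    {h : (Fin n → ℝ) → ℝ} (hg : Integrable g (gammaMeasure γ 1))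
    (hh : Integrable h (piGamma γ n)) :
    Integrable (fun x : Fin (n+1) → ℝ => g (x j) * h (fun i => x (j.succAbove i)))
      (piGamma γ (n+1)) := by
  haveI := gammaProb hγ
  have mp := measurePreserving_piFinSuccAbove (fun _ : Fin (n+1) => gammaMeasure γ 1) j
  have key := mp.integrable_comp_emb
    (MeasurableEquiv.measurableEmbedding (MeasurableEquiv.piFinSuccAbove (fun _ => ℝ) j))
    (g := fun p : ℝ × (Fin n → ℝ) => g p.1 * h p.2)
  exact key.mpr (hg.mul_prod hh)

lemma prod_decomp_integral (hγ : 0 < γ) {n : ℕ} (j : Fin (n+1)) (g : ℝ → ℝ)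
    (h : (Fin n → ℝ) → ℝ) :
    ∫ x, g (x j) * h (fun i => x (j.succAbove i)) ∂(piGamma γ (n+1))
      = (∫ y, g y ∂(gammaMeasure γ 1)) * ∫ z, h z ∂(piGamma γ n) := by
  haveI := gammaProb hγ
  have mp := measurePreserving_piFinSuccAbove (fun _ : Fin (n+1) => gammaMeasure γ 1) j
  have key := mp.integral_comp' (f := MeasurableEquiv.piFinSuccAbove (fun _ => ℝ) j)
    (fun p : ℝ × (Fin n → ℝ) => g p.1 * h p.2)
  show (∫ (x : Fin (n + 1) → ℝ),
      g ((MeasurableEquiv.piFinSuccAbove (fun _ => ℝ) j) x).1 *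
        h ((MeasurableEquiv.piFinSuccAbove (fun _ => ℝ) j) x).2 ∂Measure.pi fun _ => gammaMeasure γ 1) = _
  rw [key, integral_prod_mul]
  rfl

end ProdDecomp

section Expansions
variable {γ : ℝ}

lemma cmom_one (γ : ℝ) : cmom γ 1 = 0 := rfl

lemma cmom_step (γ : ℝ) (m : ℕ) :
    cmom γ (m+2) = ((m:ℝ)+1) * (cmom γ (m+1) + γ * cmom γ m) := rfl

lemma Sfun_decomp {n : ℕ} (γ : ℝ) (c : Fin (n+1) → ℝ) (j : Fin (n+1)) (x : Fin (n+1) → ℝ) :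
    Sfun γ c x = c j * (x j - γ)
      + Sfun γ (fun i => c (j.succAbove i)) (fun i => x (j.succAbove i)) :=
  Fin.sum_univ_succAbove _ j

lemma S_pow_expand {n : ℕ} (γ : ℝ) (c : Fin (n+1) → ℝ) (j : Fin (n+1)) (r : ℕ)
    (x : Fin (n+1) → ℝ) :
    Sfun γ c x ^ r = ∑ t ∈ Finset.range (r+1),
      (((r.choose t : ℝ) * (c j)^t) * (x j - γ)^t)
        * (Sfun γ (fun i => c (j.succAbove i)) (fun i => x (j.succAbove i)))^(r-t) := by
  rw [Sfun_decomp γ c j x, add_pow]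
  apply Finset.sum_congr rfl
  intro t _
  rw [mul_pow]
  ring

lemma gamma_integrable_centred_const (hγ : 0 < γ) (C : ℝ) (t : ℕ) :
    Integrable (fun y : ℝ => C * (y - γ)^t) (gammaMeasure γ 1) :=
  (gamma_integrable_centred hγ t).const_mul C

lemma integrable_S_pow (hγ : 0 < γ) :
    ∀ (n : ℕ) (c : Fin n → ℝ) (r : ℕ),
      Integrable (fun x => Sfun γ c x ^ r) (piGamma γ n) := by
  intro n
  induction n with
  | zero =>
    intro c r
    haveI := piGammaProb hγ 0
    simp only [Sfun, Finset.univ_eq_empty, Finset.sum_empty]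
    exact integrable_const _
  | succ n ih =>
    intro c r
    have hint := integrable_finset_sum (μ := piGamma γ (n+1)) (Finset.range (r+1))
      (fun t _ => prod_decomp_integrable hγ 0
        (gamma_integrable_centred_const hγ ((r.choose t : ℝ) * (c 0)^t) t)
        (ih (fun i => c ((0:Fin (n+1)).succAbove i)) (r-t)))
    apply hint.congr
    filter_upwards with x
    exact (S_pow_expand γ c 0 r x).symm

lemma integrable_sub_mul_S_pow (hγ : 0 < γ) {n : ℕ} (c : Fin (n+1) → ℝ) (j : Fin (n+1))
    (r : ℕ) :
    Integrable (fun x => (x j - γ) * Sfun γ c x ^ r) (piGamma γ (n+1)) := by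
  have hint := integrable_finset_sum (μ := piGamma γ (n+1)) (Finset.range (r+1))
    (fun t _ => prod_decomp_integrable hγ j
      (gamma_integrable_centred_const hγ ((r.choose t : ℝ) * (c j)^t) (t+1))
      (integrable_S_pow hγ n (fun i => c (j.succAbove i)) (r-t)))
  apply hint.congr
  filter_upwards with x
  rw [S_pow_expand γ c j r x, Finset.mul_sum]
  apply Finset.sum_congr rfl
  intro t _
  ring

noncomputable def Mint (γ : ℝ) {n : ℕ} (c : Fin n → ℝ) (r : ℕ) : ℝ :=
  ∫ x, Sfun γ c x ^ r ∂(piGamma γ n)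

noncomputable def Tint (γ : ℝ) {n : ℕ} (c : Fin n → ℝ) (j : Fin n) (r : ℕ) : ℝ :=
  ∫ x, (x j - γ) * Sfun γ c x ^ r ∂(piGamma γ n)

lemma Mint_zero (hγ : 0 < γ) {n : ℕ} (c : Fin n → ℝ) : Mint γ c 0 = 1 := by
  haveI := piGammaProb hγ n
  simp [Mint]

lemma Mint_expand (hγ : 0 < γ) {n : ℕ} (c : Fin (n+1) → ℝ) (j : Fin (n+1)) (r : ℕ) :
    Mint γ c r = ∑ t ∈ Finset.range (r+1),
      (r.choose t : ℝ) * (c j)^t * cmom γ t * Mint γ (fun i => c (j.succAbove i)) (r-t) := by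
  rw [Mint]
  have h1 : ∫ x, Sfun γ c x ^ r ∂(piGamma γ (n+1))
      = ∫ x, (∑ t ∈ Finset.range (r+1),
          (((r.choose t : ℝ) * (c j)^t) * (x j - γ)^t)
            * (Sfun γ (fun i => c (j.succAbove i)) (fun i => x (j.succAbove i)))^(r-t))
          ∂(piGamma γ (n+1)) := by
    apply integral_congr_ae
    filter_upwards with x
    exact S_pow_expand γ c j r x
  rw [h1, integral_finset_sum _ (fun t _ => prod_decomp_integrable hγ j
    (gamma_integrable_centred_const hγ ((r.choose t : ℝ) * (c j)^t) t)
    (integrable_S_pow hγ n (fun i => c (j.succAbove i)) (r-t)))]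
  apply Finset.sum_congr rfl
  intro t _
  rw [prod_decomp_integral hγ j (fun y => ((r.choose t : ℝ) * (c j)^t) * (y - γ)^t)
    (fun z => Sfun γ (fun i => c (j.succAbove i)) z ^ (r-t))]
  rw [integral_const_mul, gamma_centred_eq_cmom hγ t]
  show ((r.choose t : ℝ) * (c j)^t * cmom γ t) * Mint γ (fun i => c (j.succAbove i)) (r-t) = _
  ring

lemma Tint_expand (hγ : 0 < γ) {n : ℕ} (c : Fin (n+1) → ℝ) (j : Fin (n+1)) (r : ℕ) :
    Tint γ c j r = ∑ t ∈ Finset.range (r+1),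
      (r.choose t : ℝ) * (c j)^t * cmom γ (t+1) * Mint γ (fun i => c (j.succAbove i)) (r-t) := by
  rw [Tint]
  have h1 : ∫ x, (x j - γ) * Sfun γ c x ^ r ∂(piGamma γ (n+1))
      = ∫ x, (∑ t ∈ Finset.range (r+1),
          (((r.choose t : ℝ) * (c j)^t) * (x j - γ)^(t+1))
            * (Sfun γ (fun i => c (j.succAbove i)) (fun i => x (j.succAbove i)))^(r-t))
          ∂(piGamma γ (n+1)) := by
    apply integral_congr_ae
    filter_upwards with x
    rw [S_pow_expand γ c j r x, Finset.mul_sum]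
    apply Finset.sum_congr rfl
    intro t _
    ring
  rw [h1, integral_finset_sum _ (fun t _ => prod_decomp_integrable hγ j
    (gamma_integrable_centred_const hγ ((r.choose t : ℝ) * (c j)^t) (t+1))
    (integrable_S_pow hγ n (fun i => c (j.succAbove i)) (r-t)))]
  apply Finset.sum_congr rfl
  intro t _
  rw [prod_decomp_integral hγ j (fun y => ((r.choose t : ℝ) * (c j)^t) * (y - γ)^(t+1))
    (fun z => Sfun γ (fun i => c (j.succAbove i)) z ^ (r-t))]
  rw [integral_const_mul, gamma_centred_eq_cmom hγ (t+1)]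
  show ((r.choose t : ℝ) * (c j)^t * cmom γ (t+1)) * Mint γ (fun i => c (j.succAbove i)) (r-t) = _
  ring


lemma Tint_zero (hγ : 0 < γ) {n : ℕ} (c : Fin (n+1) → ℝ) (j : Fin (n+1)) :
    Tint γ c j 0 = 0 := by
  rw [Tint_expand hγ c j 0]
  simp [cmom_one]

lemma Tint_rec (hγ : 0 < γ) {n : ℕ} (c : Fin (n+1) → ℝ) (j : Fin (n+1)) (r : ℕ) :
    Tint γ c j (r+1) = ((r:ℝ)+1) * c j * (Tint γ c j r + γ * Mint γ c r) := by
  rw [Tint_expand hγ c j (r+1), Finset.sum_range_succ'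
    (fun t => ((r+1).choose t : ℝ) * (c j)^t * cmom γ (t+1)
      * Mint γ (fun i => c (j.succAbove i)) (r+1-t)) (r+1)]
  have hf0 : ((r+1).choose 0 : ℝ) * (c j)^0 * cmom γ (0+1)
      * Mint γ (fun i => c (j.succAbove i)) (r+1-0) = 0 := by
    simp [cmom_one]
  rw [hf0, add_zero, Tint_expand hγ c j r, Mint_expand hγ c j r]
  rw [Finset.mul_sum, mul_add, Finset.mul_sum, Finset.mul_sum, ← Finset.sum_add_distrib]
  apply Finset.sum_congr rfl
  intro i hi
  simp only [Finset.mem_range] at hi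
  have hidx : r + 1 - (i+1) = r - i := by omega
  rw [hidx]
  have hstep : cmom γ (i+1+1) = ((i:ℝ)+1) * (cmom γ (i+1) + γ * cmom γ i) := cmom_step γ i
  rw [hstep]
  have hc : (((r+1).choose (i+1) : ℕ) : ℝ) * ((i:ℝ)+1) = ((r:ℝ)+1) * (r.choose i : ℝ) := by
    exact_mod_cast (Nat.add_one_mul_choose_eq r i).symm
  linear_combination ((c j)^(i+1) * (cmom γ (i+1) + γ * cmom γ i)
    * Mint γ (fun i' => c (j.succAbove i')) (r-i)) * hc

lemma Tint_unroll (hγ : 0 < γ) {n : ℕ} (c : Fin (n+1) → ℝ) (j : Fin (n+1)) :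
    ∀ r : ℕ, Tint γ c j r
      = γ * ∑ i ∈ Finset.range r, (r.descFactorial (i+1) : ℝ) * (c j)^(i+1) * Mint γ c (r-1-i) := by
  intro r
  induction r with
  | zero => simp [Tint_zero hγ]
  | succ r ih =>
    rw [Tint_rec hγ c j r, ih, Finset.sum_range_succ'
      (fun i => ((r+1).descFactorial (i+1) : ℝ) * (c j)^(i+1) * Mint γ c (r+1-1-i)) r]
    have e1 : ∀ i ∈ Finset.range r,
        ((r+1).descFactorial (i+1+1) : ℝ) * (c j)^(i+1+1) * Mint γ c (r+1-1-(i+1))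
          = ((r:ℝ)+1) * c j * ((r.descFactorial (i+1) : ℝ) * (c j)^(i+1) * Mint γ c (r-1-i)) := by
      intro i hi
      have hidx : r + 1 - 1 - (i+1) = r - 1 - i := by omega
      have hdf : (((r+1).descFactorial (i+2) : ℕ) : ℝ) = ((r:ℝ)+1) * (r.descFactorial (i+1) : ℝ) := by
        exact_mod_cast Nat.succ_descFactorial_succ r (i+1)
      rw [hidx]
      show ((r+1).descFactorial (i+2) : ℝ) * (c j)^(i+2) * Mint γ c (r-1-i) = _
      rw [hdf]
      ring
    rw [Finset.sum_congr rfl e1]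
    have e0 : ((r+1).descFactorial (0+1) : ℝ) * (c j)^(0+1) * Mint γ c (r+1-1-0)
        = ((r:ℝ)+1) * c j * Mint γ c r := by
      have : (r+1).descFactorial 1 = r + 1 := Nat.descFactorial_one (r+1)
      rw [show r + 1 - 1 - 0 = r from rfl, this]
      push_cast
      ring
    rw [e0, mul_add, mul_add]
    congr 1
    · simp only [Finset.mul_sum]
      apply Finset.sum_congr rfl
      intro i _
      ring
    · ring

lemma Mint_step (hγ : 0 < γ) {n : ℕ} (c : Fin (n+1) → ℝ) (k : ℕ) :
    Mint γ c (k+1) = ∑ j, c j * Tint γ c j k := by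
  rw [Mint]
  have h1 : ∀ x : Fin (n+1) → ℝ,
      Sfun γ c x ^ (k+1) = ∑ j, c j * ((x j - γ) * Sfun γ c x ^ k) := by
    intro x
    rw [pow_succ, show Sfun γ c x ^ k * Sfun γ c x = Sfun γ c x * Sfun γ c x ^ k from mul_comm _ _]
    nth_rewrite 1 [Sfun]
    rw [Finset.sum_mul]
    apply Finset.sum_congr rfl
    intro j _
    ring
  rw [integral_congr_ae (Filter.Eventually.of_forall h1)]
  rw [integral_finset_sum _ (fun j _ => (integrable_sub_mul_S_pow hγ c j k).const_mul (c j))]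
  apply Finset.sum_congr rfl
  intro j _
  rw [integral_const_mul]
  rfl

noncomputable def powSum {n : ℕ} (c : Fin n → ℝ) (s : ℕ) : ℝ := ∑ j, (c j)^s

lemma Mint_eq_Q (hγ : 0 < γ) {n : ℕ} (c : Fin (n+1) → ℝ) :
    ∀ k, Mint γ c k = Qseq γ (powSum c) k := by
  intro k
  induction k using Nat.strong_induction_on with
  | _ k ih =>
    match k with
    | 0 => rw [Mint_zero hγ]; simp [Qseq]
    | (k+1) =>
      rw [Mint_step hγ c k]
      have h2 : (∑ j, c j * Tint γ c j k)
          = γ * ∑ i ∈ Finset.range k, (k.descFactorial (i+1) : ℝ) * powSum c (i+2)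
              * Mint γ c (k-1-i) := by
        rw [Finset.sum_congr rfl
          (fun j _ => by rw [Tint_unroll hγ c j k, Finset.mul_sum, Finset.mul_sum])]
        rw [Finset.sum_comm, Finset.mul_sum]
        apply Finset.sum_congr rfl
        intro i _
        have hps : (k.descFactorial (i+1) : ℝ) * powSum c (i+2) * Mint γ c (k-1-i)
            = ∑ j, (k.descFactorial (i+1) : ℝ) * (c j)^(i+2) * Mint γ c (k-1-i) := by
          rw [powSum, Finset.mul_sum, Finset.sum_mul]
        rw [hps, Finset.mul_sum]
        apply Finset.sum_congr rfl
        intro j _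
        ring
      rw [h2]
      show γ * _ = Qseq γ (powSum c) (k+1)
      rw [Qseq]
      congr 1
      apply Finset.sum_congr rfl
      intro i hi
      simp only [Finset.mem_range] at hi
      rw [ih (k-1-i) (by omega)]

end Expansions
end P4

section Final
open MeasureTheory ProbabilityTheory Real

variable {γ : ℝ}

lemma joint_map_eq (hγ : 0 < γ) {n : ℕ} {Ω : Type*} [MeasurableSpace Ω] (μ : Measure Ω)
    [IsProbabilityMeasure μ] (X : Fin n → Ω → ℝ) (hXmeas : ∀ j, Measurable (X j))
    (hXindep : iIndepFun X μ)
    (hXdist : ∀ j, μ.map (X j) = gammaMeasure γ 1) :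
    μ.map (fun ω j => X j ω) = piGamma γ n := by
  haveI := gammaProb hγ
  rw [piGamma]
  have hg : Measurable (fun ω (j : Fin n) => X j ω) := measurable_pi_lambda _ hXmeas
  refine (Measure.pi_eq fun s hs => ?_).symm
  rw [Measure.map_apply hg (MeasurableSet.univ_pi hs)]
  have hpre : (fun ω (j : Fin n) => X j ω) ⁻¹' (Set.univ.pi s) = ⋂ j, X j ⁻¹' (s j) := by
    ext ω
    simp [Set.mem_univ_pi, Set.mem_iInter]
  have hbi : ⋂ j, X j ⁻¹' (s j) = ⋂ j ∈ (Finset.univ : Finset (Fin n)), X j ⁻¹' (s j) := by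
    simp
  rw [hpre, hbi, hXindep.meas_biInter (fun i _ => ⟨s i, hs i, rfl⟩)]
  apply Finset.prod_congr rfl
  intro i _
  rw [← Measure.map_apply (hXmeas i) (hs i), hXdist i]

lemma integral_transfer (hγ : 0 < γ) {n : ℕ} {Ω : Type*} [MeasurableSpace Ω] (μ : Measure Ω)
    [IsProbabilityMeasure μ] (X : Fin n → Ω → ℝ) (hXmeas : ∀ j, Measurable (X j))
    (hXindep : iIndepFun X μ)
    (hXdist : ∀ j, μ.map (X j) = gammaMeasure γ 1) (d : Fin n → ℝ) (k : ℕ) :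
    ∫ ω, (∑ j, d j * (X j ω - γ)) ^ k ∂μ = Mint γ d k := by
  have hg : Measurable (fun ω (j : Fin n) => X j ω) := measurable_pi_lambda _ hXmeas
  have hS : Measurable (Sfun γ d) :=
    Finset.measurable_sum _ (fun j _ => by fun_prop)
  have hf : Measurable (fun x : Fin n → ℝ => Sfun γ d x ^ k) := hS.pow_const k
  rw [Mint, ← joint_map_eq hγ μ X hXmeas hXindep hXdist,
    integral_map hg.aemeasurable hf.aestronglyMeasurable]
  rfl

end Final

open MeasureTheory ProbabilityTheory Real

theorem schur_convex_centred_moments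
    {Ω : Type*} [MeasurableSpace Ω] (μ : Measure Ω) [IsProbabilityMeasure μ]
    (γ : ℝ) (hγ : 0 < γ) (n k : ℕ) (hn : 0 < n) (hk : 0 < k)
    (X : Fin n → Ω → ℝ) (hXmeas : ∀ j, Measurable (X j))
    (hXindep : iIndepFun X μ)
    (hXdist : ∀ j, μ.map (X j) = gammaMeasure γ 1)
    (a b : Fin n → ℝ) (ha : ∀ j, 0 ≤ a j) (hb : ∀ j, 0 ≤ b j)
    (hmaj : Majorizes a b) :
    ∫ ω, (∑ j, Real.sqrt (b j) * (X j ω - γ)) ^ k ∂μ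
      ≤ ∫ ω, (∑ j, Real.sqrt (a j) * (X j ω - γ)) ^ k ∂μ := by
  obtain ⟨m, rfl⟩ : ∃ m, n = m + 1 := ⟨n - 1, by omega⟩
  rw [integral_transfer hγ μ X hXmeas hXindep hXdist (fun j => Real.sqrt (b j)) k,
    integral_transfer hγ μ X hXmeas hXindep hXdist (fun j => Real.sqrt (a j)) k,
    Mint_eq_Q hγ _ k, Mint_eq_Q hγ _ k]
  have hq : ∀ s, 2 ≤ s → 0 ≤ powSum (fun j => Real.sqrt (b j)) s :=
    fun s _ => powsum_nonneg b s
  have hpq : ∀ s, 2 ≤ s → powSum (fun j => Real.sqrt (b j)) s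
      ≤ powSum (fun j => Real.sqrt (a j)) s :=
    fun s hs => powsum_le ha hb hmaj.1 hmaj.2 hs
  exact (Qseq_mono hγ.le hq hpq k).2
end

section
/- Let γ > 0 and let n be a positive integer. The function F(x₁,…,xₙ) = ∏ⱼ e^{γ√xⱼ} (1 + √xⱼ)^{−γ} is Schur-concave on [0,∞)ⁿ: if a = (a₁,…,aₙ) and b = (b₁,…,bₙ) are vectors of nonnegative reals such that a majorizes b, then F(a) ≤ F(b). -/
/-!
Write `F(x) = exp (γ ∑ⱼ g(xⱼ))` with `g(x) = √x - log (1 + √x)`. Since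
`g'(x) = 1 / (2 (1 + √x))` decreases, `g` is concave on `[0, ∞)`, and the claim is Karamata's
inequality for `g`. It is proved from the supergradient inequality `g x ≤ g y + g'(y) (x - y)`:
pair the increasingly sorted entries of `a` and `b`, and sum by parts, with the decreasing weights
`g'(bⱼ)` against the prefix sums of `a - b`, which majorization makes nonpositive.
-/

open Real

open Finset

theorem Finset.sum_le_sum_of_card_eq_of_forall_le {ι M : Type*} [DecidableEq ι]
    [AddCommMonoid M] [LinearOrder M] [IsOrderedAddMonoid M] {f : ι → M} {s u : Finset ι}
    (hs : ∀ i ∈ s, ∀ j ∉ s, f i ≤ f j) (hcard : #u = #s) :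
    ∑ i ∈ s, f i ≤ ∑ i ∈ u, f i := by
  rcases (s \ u).eq_empty_or_nonempty with hsu | hsu
  · rw [eq_of_subset_of_card_le (sdiff_eq_empty_iff_subset.1 hsu) hcard.le]
  set m := (s \ u).sup' hsu f
  calc ∑ i ∈ s, f i = ∑ i ∈ s ∩ u, f i + ∑ i ∈ s \ u, f i :=
        (sum_inter_add_sum_sdiff _ _ _).symm
    _ ≤ ∑ i ∈ u ∩ s, f i + #(u \ s) • m := by
      rw [inter_comm, card_sdiff_comm hcard]
      gcongr
      exact sum_le_card_nsmul _ _ _ fun i hi => le_sup' f hi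
    _ ≤ ∑ i ∈ u ∩ s, f i + ∑ i ∈ u \ s, f i := by
      gcongr
      refine card_nsmul_le_sum _ _ _ fun j hj => sup'_le _ _ fun i hi => ?_
      exact hs i (mem_sdiff.1 hi).1 j (mem_sdiff.1 hj).2
    _ = ∑ i ∈ u, f i := sum_inter_add_sum_sdiff _ _ _

theorem Majorizes.exists_sum_le {n : ℕ} {a b : Fin n → ℝ} (h : Majorizes a b)
    (s : Finset (Fin n)) :
    ∃ t : Finset (Fin n), #t = #s ∧ ∑ j ∈ t, a j ≤ ∑ j ∈ s, b j := by
  obtain ⟨t, hcard, hsum⟩ := h.1 sᶜ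
  refine ⟨tᶜ, ?_, ?_⟩
  · rw [card_compl, hcard, card_compl]
    have := card_le_univ s
    omega
  · linarith [sum_add_sum_compl s b, sum_add_sum_compl t a, h.2]

theorem Majorizes.sum_filter_lt_le {n : ℕ} {a b : Fin n → ℝ} (h : Majorizes a b)
    {σ : Equiv.Perm (Fin n)} (hσ : Monotone (a ∘ σ)) (τ : Equiv.Perm (Fin n)) (k : ℕ) :
    ∑ j ∈ univ.filter (fun j : Fin n => (j : ℕ) < k), a (σ j)
      ≤ ∑ j ∈ univ.filter (fun j : Fin n => (j : ℕ) < k), b (τ j) := by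
  set low := univ.filter (fun j : Fin n => (j : ℕ) < k)
  obtain ⟨t, hcard, hsum⟩ := h.exists_sum_le (low.map τ.toEmbedding)
  have hbelow :
      ∀ i ∈ low.map σ.toEmbedding, ∀ j ∉ low.map σ.toEmbedding, a i ≤ a j := by
    intro i hi j hj
    simp only [low, mem_map_equiv, mem_filter, mem_univ, true_and, not_lt] at hi hj
    simpa using hσ (Fin.le_def.2 (by omega) : σ.symm i ≤ σ.symm j)
  calc ∑ j ∈ low, a (σ j) = ∑ i ∈ low.map σ.toEmbedding, a i :=
        (sum_map low σ.toEmbedding a).symm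
    _ ≤ ∑ i ∈ t, a i := sum_le_sum_of_card_eq_of_forall_le hbelow (by simpa using hcard)
    _ ≤ ∑ i ∈ low.map τ.toEmbedding, b i := hsum
    _ = ∑ j ∈ low, b (τ j) := sum_map low τ.toEmbedding b

theorem Fin.sum_mul_le_mul_sum_of_antitone {m : ℕ} {c x : Fin m → ℝ} (hc : Antitone c)
    (hx : ∀ k : ℕ, ∑ j ∈ univ.filter (fun j : Fin m => (j : ℕ) < k), x j ≤ 0) {t : ℝ}
    (ht : ∀ j, t ≤ c j) : ∑ j, c j * x j ≤ t * ∑ j, x j := by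
  induction m generalizing t with
  | zero => simp
  | succ m ih =>
    have hprefix (k : ℕ) : ∑ j ∈ univ.filter (fun j : Fin m => (j : ℕ) < k), x j.castSucc
        = ∑ j ∈ univ.filter (fun j : Fin (m + 1) => (j : ℕ) < min k m), x j := by
      simp only [sum_filter, Fin.sum_univ_castSucc, Fin.val_castSucc, Fin.val_last]
      rw [if_neg (by omega), add_zero]
      exact sum_congr rfl fun j _ => by simp only [lt_min_iff, j.is_lt, and_true]
    have hinit : ∑ j : Fin m, c j.castSucc * x j.castSucc
        ≤ c (Fin.last m) * ∑ j : Fin m, x j.castSucc :=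
      ih (hc.comp_monotone Fin.strictMono_castSucc.monotone)
        (fun k => (hprefix k).trans_le (hx _)) (fun j => hc (Fin.le_last _))
    have htotal : ∑ j, x j ≤ 0 := by
      have := hx (m + 1)
      rwa [filter_true_of_mem fun j _ => j.is_lt] at this
    calc ∑ j, c j * x j
        = ∑ j : Fin m, c j.castSucc * x j.castSucc + c (Fin.last m) * x (Fin.last m) :=
          Fin.sum_univ_castSucc _
      _ ≤ c (Fin.last m) * (∑ j : Fin m, x j.castSucc + x (Fin.last m)) := by
          rw [mul_add]; gcongr
      _ = c (Fin.last m) * ∑ j, x j := by rw [Fin.sum_univ_castSucc]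
      _ ≤ t * ∑ j, x j := mul_le_mul_of_nonpos_right (ht _) htotal

theorem Majorizes.sum_le_sum_of_le_add_mul_sub {n : ℕ} {a b : Fin n → ℝ} (h : Majorizes a b)
    {S : Set ℝ} {g d : ℝ → ℝ} (hd : AntitoneOn d S)
    (hg : ∀ x ∈ S, ∀ y ∈ S, g x ≤ g y + d y * (x - y)) (ha : ∀ j, a j ∈ S)
    (hb : ∀ j, b j ∈ S) : ∑ j, g (a j) ≤ ∑ j, g (b j) := by
  let σ := Tuple.sort a
  let τ := Tuple.sort b
  let c : Fin n → ℝ := fun j => d (b (τ j))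
  let x : Fin n → ℝ := fun j => a (σ j) - b (τ j)
  have hc : Antitone c := fun i j hij => hd (hb _) (hb _) (Tuple.monotone_sort b hij)
  have hx (k : ℕ) : ∑ j ∈ univ.filter (fun j : Fin n => (j : ℕ) < k), x j ≤ 0 := by
    simpa [x, sum_sub_distrib] using h.sum_filter_lt_le (Tuple.monotone_sort a) τ k
  have hx_sum : ∑ j, x j = 0 := by
    simp only [x, sum_sub_distrib, Equiv.sum_comp, h.2, sub_self]
  rw [← Equiv.sum_comp σ, ← Equiv.sum_comp τ (fun j => g (b j))]
  calc ∑ j, g (a (σ j)) ≤ ∑ j, (g (b (τ j)) + c j * x j) :=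
        sum_le_sum fun j _ => hg _ (ha _) _ (hb _)
    _ = ∑ j, g (b (τ j)) + ∑ j, c j * x j := sum_add_distrib
    _ ≤ ∑ j, g (b (τ j)) + (⨅ j, c j) * ∑ j, x j := by
        gcongr
        exact Fin.sum_mul_le_mul_sum_of_antitone hc hx
          fun j => ciInf_le (Set.finite_range c).bddBelow j
    _ = ∑ j, g (b (τ j)) := by rw [hx_sum, mul_zero, add_zero]

/-- The supergradient inequality for `x ↦ √x - log (1 + √x)`, in the variable `s = √x`. -/
theorem sub_log_one_add_le {s t : ℝ} (hs : 0 ≤ s) (ht : 0 ≤ t) :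
    s - log (1 + s) ≤ t - log (1 + t) + (s ^ 2 - t ^ 2) / (2 * (1 + t)) := by
  let ψ : ℝ → ℝ := fun u => u - log (1 + u) - u ^ 2 / (2 * (1 + t))
  have hψ (u : ℝ) (hu : 0 ≤ u) : HasDerivAt ψ (u * (t - u) / ((1 + u) * (1 + t))) u := by
    have h1u : 1 + u ≠ 0 := by positivity
    refine (((hasDerivAt_id' u).sub (((hasDerivAt_id' u).const_add 1).log h1u)).sub
      ((hasDerivAt_pow 2 u).div_const (2 * (1 + t)))).congr_deriv ?_
    field_simp
    ring
  have hcont : ContinuousOn ψ (Set.Ici 0) := fun u hu => (hψ u hu).continuousAt.continuousWithinAt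
  suffices ψ s ≤ ψ t by
    simp only [ψ] at this
    rw [sub_div]
    linarith
  rcases le_total s t with hst | hts
  · refine monotoneOn_of_hasDerivWithinAt_nonneg (convex_Icc 0 t)
      (hcont.mono Set.Icc_subset_Ici_self)
      (fun u hu => (hψ u (interior_subset hu).1).hasDerivWithinAt) (fun u hu => ?_)
      ⟨hs, hst⟩ ⟨ht, le_rfl⟩ hst
    rw [interior_Icc] at hu
    have : 0 < u := hu.1
    exact div_nonneg (mul_nonneg hu.1.le (sub_nonneg.2 hu.2.le)) (by positivity)
  · refine antitoneOn_of_hasDerivWithinAt_nonpos (convex_Ici t)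
      (hcont.mono (Set.Ici_subset_Ici.2 ht))
      (fun u hu => (hψ u (ht.trans (interior_subset hu))).hasDerivWithinAt) (fun u hu => ?_)
      Set.self_mem_Ici hts hts
    rw [interior_Ici] at hu
    have hu : t < u := hu
    have : 0 < u := ht.trans_lt hu
    exact div_nonpos_of_nonpos_of_nonneg
      (mul_nonpos_of_nonneg_of_nonpos (ht.trans hu.le) (by linarith)) (by positivity)

theorem exp_mul_mul_rpow_neg {x : ℝ} (hx : 0 < x) (γ s : ℝ) :
    exp (γ * s) * x ^ (-γ) = exp (γ * (s - log x)) := by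
  rw [rpow_def_of_pos hx, ← exp_add]
  ring_nf

theorem schur_concave_F_general
    (γ : ℝ) (hγ : 0 < γ) (n : ℕ)
    (a b : Fin n → ℝ) (ha : ∀ j, 0 ≤ a j) (hb : ∀ j, 0 ≤ b j)
    (hmaj : Majorizes a b) :
    ∏ j, Real.exp (γ * Real.sqrt (a j)) * (1 + Real.sqrt (a j)) ^ (-γ)
      ≤ ∏ j, Real.exp (γ * Real.sqrt (b j)) * (1 + Real.sqrt (b j)) ^ (-γ) := by
  have hd : AntitoneOn (fun y : ℝ => (2 * (1 + √y))⁻¹) (Set.Ici 0) :=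
    fun x _ y _ hxy => inv_anti₀ (by positivity) (by gcongr)
  have hg (x : ℝ) (hx : 0 ≤ x) (y : ℝ) (hy : 0 ≤ y) :
      √x - log (1 + √x) ≤ √y - log (1 + √y) + (2 * (1 + √y))⁻¹ * (x - y) := by
    have := sub_log_one_add_le (sqrt_nonneg x) (sqrt_nonneg y)
    rwa [sq_sqrt hx, sq_sqrt hy, div_eq_inv_mul] at this
  have hF (x : ℝ) : exp (γ * √x) * (1 + √x) ^ (-γ) = exp (γ * (√x - log (1 + √x))) :=
    exp_mul_mul_rpow_neg (by positivity) γ _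
  have hsum := hmaj.sum_le_sum_of_le_add_mul_sub hd hg ha hb
  simp only [hF, ← exp_sum, exp_le_exp, ← mul_sum]
  exact mul_le_mul_of_nonneg_left hsum hγ.le

theorem schur_concave_F
    (γ : ℝ) (hγ : 0 < γ) (n : ℕ) (hn : 0 < n)
    (a b : Fin n → ℝ) (ha : ∀ j, 0 ≤ a j) (hb : ∀ j, 0 ≤ b j)
    (hmaj : Majorizes a b) :
    ∏ j, Real.exp (γ * Real.sqrt (a j)) * (1 + Real.sqrt (a j)) ^ (-γ)
      ≤ ∏ j, Real.exp (γ * Real.sqrt (b j)) * (1 + Real.sqrt (b j)) ^ (-γ) :=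
  schur_concave_F_general γ hγ n a b ha hb hmaj
end

section
/- Let γ > 0 and let X be a random variable with the Gamma(γ) distribution. Then for every positive integer k, the centred moment satisfies E(X − γ)^k ≥ 0. -/
open MeasureTheory ProbabilityTheory Real Set Filter Topology
open scoped ENNReal NNReal

namespace GammaCentredAux

/-- The integrand for the `n`-th centred moment of the Gamma(γ) distribution (up to the
normalising constant `Γ(γ)⁻¹`). -/
noncomputable def g (γ : ℝ) (n : ℕ) (x : ℝ) : ℝ := (x - γ) ^ n * (x ^ (γ - 1) * Real.exp (-x))

/-- The unnormalised `n`-th centred moment. -/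
noncomputable def I (γ : ℝ) (n : ℕ) : ℝ := ∫ x in Ioi (0:ℝ), g γ n x

variable {γ : ℝ} (hγ : 0 < γ)

lemma meas_g (n : ℕ) : Measurable (g γ n) := by unfold g; fun_prop

lemma intg_base {p : ℝ} (hp : 0 < p) :
    IntegrableOn (fun x : ℝ => x ^ (p - 1) * Real.exp (-x)) (Ioi 0) := by
  have := Real.GammaIntegral_convergent hp
  exact this.congr_fun (fun x _ => mul_comm _ _) measurableSet_Ioi

include hγ

lemma intg (n : ℕ) : IntegrableOn (g γ n) (Ioi 0) := by
  have h1 : IntegrableOn (fun x : ℝ => γ ^ n * (x ^ (γ - 1) * Real.exp (-x))) (Ioi 0) :=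
    (intg_base hγ).const_mul _
  have h2 : IntegrableOn (fun x : ℝ => x ^ ((n : ℝ) + γ - 1) * Real.exp (-x)) (Ioi 0) :=
    intg_base (by positivity)
  have hbound : ∀ x ∈ Ioi (0:ℝ), ‖g γ n x‖ ≤
      2 ^ n * (γ ^ n * (x ^ (γ - 1) * Real.exp (-x)) + x ^ ((n : ℝ) + γ - 1) * Real.exp (-x)) := by
    intro x hx
    have hx0 : (0:ℝ) < x := hx
    have hd : x ^ ((n : ℝ) + γ - 1) = x ^ n * x ^ (γ - 1) := by
      rw [← Real.rpow_natCast x n, ← Real.rpow_add hx0]; ring_nf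
    have h1 : |x - γ| ^ n ≤ 2 ^ n * (γ ^ n + x ^ n) := by
      calc |x - γ| ^ n ≤ (2 * max γ x) ^ n := by
            apply pow_le_pow_left₀ (abs_nonneg _)
            rw [abs_sub_le_iff]
            constructor
            · nlinarith [le_max_left γ x, le_max_right γ x, hγ.le, hx0.le]
            · nlinarith [le_max_left γ x, le_max_right γ x, hγ.le, hx0.le]
        _ = 2 ^ n * max γ x ^ n := by rw [mul_pow]
        _ ≤ 2 ^ n * (γ ^ n + x ^ n) := by
            gcongr
            rcases max_cases γ x with ⟨h, _⟩ | ⟨h, _⟩ <;> rw [h] <;>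
              nlinarith [pow_nonneg hγ.le n, pow_nonneg hx0.le n]
    have hpos : 0 ≤ x ^ (γ - 1) * Real.exp (-x) := by positivity
    calc ‖g γ n x‖ = |x - γ| ^ n * (x ^ (γ - 1) * Real.exp (-x)) := by
          rw [g, norm_mul, norm_pow, Real.norm_eq_abs, Real.norm_eq_abs, abs_of_nonneg hpos]
      _ ≤ 2 ^ n * (γ ^ n + x ^ n) * (x ^ (γ - 1) * Real.exp (-x)) := by gcongr
      _ = 2 ^ n * (γ ^ n * (x ^ (γ - 1) * Real.exp (-x))
            + x ^ ((n : ℝ) + γ - 1) * Real.exp (-x)) := by rw [hd]; ring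
  refine Integrable.mono' ((h1.add h2).const_mul ((2:ℝ) ^ n))
    ((meas_g n).aestronglyMeasurable) ?_
  filter_upwards [ae_restrict_mem measurableSet_Ioi] with x hx using hbound x hx

lemma tendsto_F (m : ℕ) :
    Tendsto (fun x : ℝ => (x - γ) ^ m * (x ^ γ * Real.exp (-x))) atTop (𝓝 0) := by
  apply squeeze_zero' (f := fun x : ℝ => (x - γ) ^ m * (x ^ γ * Real.exp (-x)))
    (g := fun x : ℝ => x ^ ((m : ℝ) + γ) * Real.exp (-(1:ℝ) * x))
  · filter_upwards [eventually_ge_atTop (max γ 1)] with x hx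
    have h1 : γ ≤ x := le_trans (le_max_left _ _) hx
    have h2 : (0:ℝ) < x := lt_of_lt_of_le one_pos (le_trans (le_max_right _ _) hx)
    have : (0:ℝ) ≤ x - γ := by linarith
    positivity
  · filter_upwards [eventually_ge_atTop (max γ 1)] with x hx
    have h1 : γ ≤ x := le_trans (le_max_left _ _) hx
    have h2 : (0:ℝ) < x := lt_of_lt_of_le one_pos (le_trans (le_max_right _ _) hx)
    have h3 : x ^ ((m : ℝ) + γ) = x ^ m * x ^ γ := by
      rw [← Real.rpow_natCast x m, ← Real.rpow_add h2]
    rw [h3, neg_one_mul]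
    have h4 : (x - γ) ^ m ≤ x ^ m := by
      apply pow_le_pow_left₀ (by linarith) (by linarith)
    have h5 : (0:ℝ) ≤ x ^ γ * Real.exp (-x) := by positivity
    nlinarith [mul_le_mul_of_nonneg_right h4 h5]
  · exact tendsto_rpow_mul_exp_neg_mul_atTop_nhds_zero _ 1 one_pos

lemma cont_F (m : ℕ) :
    ContinuousWithinAt (fun x : ℝ => (x - γ) ^ m * (x ^ γ * Real.exp (-x))) (Ici 0) 0 := by
  apply ContinuousWithinAt.mul
  · exact ((continuous_id.sub continuous_const).pow m).continuousWithinAt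
  · exact ((Real.continuousAt_rpow_const 0 γ (Or.inr hγ.le)).mul
      (Real.continuous_exp.comp continuous_neg).continuousAt).continuousWithinAt

omit hγ in
lemma deriv_F (m : ℕ) {x : ℝ} (hx : x ∈ Ioi (0:ℝ)) :
    HasDerivAt (fun x : ℝ => (x - γ) ^ m * (x ^ γ * Real.exp (-x)))
      ((m : ℝ) * (x - γ) ^ (m - 1) * (x ^ γ * Real.exp (-x))
        + (x - γ) ^ m * (γ * x ^ (γ - 1) * Real.exp (-x) + x ^ γ * (Real.exp (-x) * (-1)))) x := by
  have hx0 : x ≠ 0 := ne_of_gt hx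
  have h1 : HasDerivAt (fun x : ℝ => (x - γ) ^ m) ((m : ℝ) * (x - γ) ^ (m - 1)) x := by
    have h := (hasDerivAt_pow m (x - γ)).comp x ((hasDerivAt_id x).sub_const γ)
    rw [mul_one] at h
    exact h
  have h2 : HasDerivAt (fun x : ℝ => x ^ γ) (γ * x ^ (γ - 1)) x :=
    Real.hasDerivAt_rpow_const (Or.inl hx0)
  have h3 : HasDerivAt (fun x : ℝ => Real.exp (-x)) (Real.exp (-x) * (-1)) x := by
    simpa using (hasDerivAt_neg x).exp
  exact h1.mul (h2.mul h3)

omit hγ in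
lemma heqφ (m : ℕ) : EqOn
    (fun x => (m : ℝ) * g γ m x + ((m : ℝ) * γ) * g γ (m - 1) x + γ * g γ m x
      - (g γ (m + 1) x + γ * g γ m x))
    (fun x : ℝ => (m : ℝ) * (x - γ) ^ (m - 1) * (x ^ γ * Real.exp (-x))
        + (x - γ) ^ m * (γ * x ^ (γ - 1) * Real.exp (-x) + x ^ γ * (Real.exp (-x) * (-1))))
    (Ioi 0) := by
  intro x hx
  have hx0 : (0:ℝ) < x := hx
  have hxγ : x ^ γ = x ^ (1:ℝ) * x ^ (γ - 1) := by rw [← Real.rpow_add hx0]; norm_num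
  simp only [hxγ, Real.rpow_one]
  cases m with
  | zero => simp [g]; ring
  | succ j => simp only [g, Nat.succ_sub_one, Nat.cast_add, Nat.cast_one]; ring

lemma rec_I (m : ℕ) : I γ (m + 1) = m * I γ m + (m * γ) * I γ (m - 1) := by
  have iA : Integrable (fun x => (m : ℝ) * g γ m x + ((m : ℝ) * γ) * g γ (m - 1) x
      + γ * g γ m x) (volume.restrict (Ioi 0)) :=
    (((intg hγ m).const_mul _).add ((intg hγ (m - 1)).const_mul _)).add
      ((intg hγ m).const_mul _)
  have iB : Integrable (fun x => g γ (m + 1) x + γ * g γ m x) (volume.restrict (Ioi 0)) :=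
    (intg hγ (m + 1)).add ((intg hγ m).const_mul _)
  have hφint : IntegrableOn
      (fun x => (m : ℝ) * g γ m x + ((m : ℝ) * γ) * g γ (m - 1) x + γ * g γ m x
        - (g γ (m + 1) x + γ * g γ m x)) (Ioi 0) := iA.sub iB
  have hF'int : IntegrableOn
      (fun x : ℝ => (m : ℝ) * (x - γ) ^ (m - 1) * (x ^ γ * Real.exp (-x))
        + (x - γ) ^ m * (γ * x ^ (γ - 1) * Real.exp (-x) + x ^ γ * (Real.exp (-x) * (-1))))
      (Ioi 0) := hφint.congr_fun (heqφ m) measurableSet_Ioi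
  have hftc : ∫ x in Ioi (0:ℝ), ((m : ℝ) * (x - γ) ^ (m - 1) * (x ^ γ * Real.exp (-x))
        + (x - γ) ^ m * (γ * x ^ (γ - 1) * Real.exp (-x) + x ^ γ * (Real.exp (-x) * (-1)))) = 0 := by
    have := integral_Ioi_of_hasDerivAt_of_tendsto (cont_F hγ m) (fun x hx => deriv_F m hx)
      hF'int (tendsto_F hγ m)
    rw [this, Real.zero_rpow hγ.ne']
    simp
  have hφ : ∫ x in Ioi (0:ℝ), ((m : ℝ) * g γ m x + ((m : ℝ) * γ) * g γ (m - 1) x + γ * g γ m x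
      - (g γ (m + 1) x + γ * g γ m x)) = 0 := by
    rw [setIntegral_congr_fun measurableSet_Ioi (heqφ m)]
    exact hftc
  have i1 : Integrable (fun x => (m : ℝ) * g γ m x + ((m : ℝ) * γ) * g γ (m - 1) x)
      (volume.restrict (Ioi 0)) :=
    ((intg hγ m).const_mul _).add ((intg hγ (m - 1)).const_mul _)
  rw [integral_sub iA iB,
    integral_add i1 ((intg hγ m).const_mul _),
    integral_add ((intg hγ m).const_mul _) ((intg hγ (m-1)).const_mul _),
    integral_add (intg hγ (m + 1)) ((intg hγ m).const_mul _),
    integral_const_mul, integral_const_mul, integral_const_mul] at hφ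
  unfold I
  linarith [hφ]

lemma I_nonneg : ∀ n, 0 ≤ I γ n := by
  intro n
  induction n using Nat.strong_induction_on with
  | _ n ih =>
    match n with
    | 0 =>
      apply setIntegral_nonneg measurableSet_Ioi
      intro x hx
      have hx0 : (0:ℝ) < x := hx
      simp only [g, pow_zero, one_mul]
      positivity
    | 1 =>
      have := rec_I hγ 0
      simp at this
      rw [this]
    | (j+2) =>
      have hr := rec_I hγ (j + 1)
      simp only [Nat.add_sub_cancel] at hr
      rw [hr]
      have h1 : 0 ≤ I γ (j + 1) := ih (j + 1) (by omega)
      have h2 : 0 ≤ I γ j := ih j (by omega)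
      positivity

end GammaCentredAux

open GammaCentredAux

theorem gamma_centred_moments_nonneg
    {Ω : Type*} [MeasurableSpace Ω] (μ : Measure Ω) [IsProbabilityMeasure μ]
    (γ : ℝ) (hγ : 0 < γ)
    (X : Ω → ℝ) (hXmeas : Measurable X)
    (hXdist : μ.map X = gammaMeasure γ 1)
    (k : ℕ) (hk : 0 < k) :
    0 ≤ ∫ ω, (X ω - γ) ^ k ∂μ := by
  have hmeas : AEStronglyMeasurable (fun x : ℝ => (x - γ) ^ k) (μ.map X) :=
    ((measurable_id.sub_const γ).pow_const k).aestronglyMeasurable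
  have h1 : ∫ ω, (X ω - γ) ^ k ∂μ = ∫ x, (x - γ) ^ k ∂(μ.map X) :=
    (integral_map hXmeas.aemeasurable hmeas).symm
  rw [h1, hXdist]
  have h2 : gammaMeasure γ 1
      = volume.withDensity (fun x => ((gammaPDFReal γ 1 x).toNNReal : ℝ≥0∞)) := rfl
  rw [h2, integral_withDensity_eq_integral_smul (measurable_gammaPDFReal γ 1).real_toNNReal]
  have h3 : ∫ x : ℝ, (gammaPDFReal γ 1 x).toNNReal • (x - γ) ^ k
      = ∫ x in Ioi (0:ℝ), (gammaPDFReal γ 1 x).toNNReal • (x - γ) ^ k := by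
    symm
    apply setIntegral_eq_integral_of_ae_compl_eq_zero
    filter_upwards [compl_mem_ae_iff.mpr (measure_singleton (0:ℝ))] with x hx0 hx
    have hxlt : x < 0 := by
      simp only [mem_Ioi, not_lt] at hx
      have hne : x ≠ 0 := by simpa using hx0
      exact lt_of_le_of_ne hx hne
    rw [gammaPDFReal, if_neg (not_le.mpr hxlt)]
    simp
  rw [h3]
  have h4 : ∫ x in Ioi (0:ℝ), (gammaPDFReal γ 1 x).toNNReal • (x - γ) ^ k
      = ∫ x in Ioi (0:ℝ), (Real.Gamma γ)⁻¹ * g γ k x := by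
    apply setIntegral_congr_fun measurableSet_Ioi
    intro x hx
    have hx0 : (0:ℝ) < x := hx
    have hnn : 0 ≤ gammaPDFReal γ 1 x := gammaPDFReal_nonneg hγ one_pos x
    show (gammaPDFReal γ 1 x).toNNReal • (x - γ) ^ k = (Real.Gamma γ)⁻¹ * g γ k x
    rw [NNReal.smul_def, Real.coe_toNNReal _ hnn, gammaPDFReal, if_pos hx0.le, Real.one_rpow]
    simp only [one_mul, g, smul_eq_mul]
    ring
  rw [h4, integral_const_mul]
  have hΓ : 0 < Real.Gamma γ := Real.Gamma_pos_of_pos hγ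
  have := I_nonneg hγ k
  unfold I at this
  positivity
end

section
/- Let γ > 0 and let n be a positive integer with nγ < 1. Let X₁,…,Xₙ be independent random variables each with the Gamma(γ) distribution and let a₁,…,aₙ be positive reals. Then the density of Σⱼ √aⱼ Xⱼ is unbounded, i.e. M(Σⱼ √aⱼ Xⱼ) = +∞. -/
open MeasureTheory ProbabilityTheory Real Set

lemma gamma_Icc_lower {γ : ℝ} (hγ : 0 < γ) {t : ℝ} (ht : 0 < t) (ht1 : t ≤ 1) :
    ENNReal.ofReal (Real.exp (-1) / (Real.Gamma γ * γ) * t ^ γ) ≤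
      gammaMeasure γ 1 (Set.Icc 0 t) := by
  have hG : 0 < Real.Gamma γ := Real.Gamma_pos_of_pos hγ
  rw [gammaMeasure, withDensity_apply _ measurableSet_Icc]
  have h1 : ∫⁻ x in Set.Ioc 0 t, ENNReal.ofReal (Real.exp (-1) / Real.Gamma γ * x ^ (γ - 1)) ≤
      ∫⁻ x in Set.Icc 0 t, gammaPDF γ 1 x := by
    refine le_trans (setLIntegral_mono ((measurable_gammaPDFReal γ 1).ennreal_ofReal) ?_)
      (lintegral_mono_set Set.Ioc_subset_Icc_self)
    intro x hx
    rw [gammaPDFReal, if_pos hx.1.le, Real.one_rpow, one_mul]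
    refine ENNReal.ofReal_le_ofReal ?_
    have hexp : Real.exp (-1) ≤ Real.exp (-x) := Real.exp_le_exp.mpr (by linarith [hx.2, ht1])
    have hx1 : (0:ℝ) ≤ x ^ (γ - 1) := Real.rpow_nonneg hx.1.le _
    calc Real.exp (-1) / Real.Gamma γ * x ^ (γ - 1)
        = 1 / Real.Gamma γ * x ^ (γ - 1) * Real.exp (-1) := by ring
      _ ≤ 1 / Real.Gamma γ * x ^ (γ - 1) * Real.exp (-x) := by
          have h := mul_le_mul_of_nonneg_left hexp
            (by positivity : (0:ℝ) ≤ 1 / Real.Gamma γ * x ^ (γ - 1))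
          simpa using h
  refine le_trans ?_ h1
  have hInt : IntegrableOn (fun x : ℝ => Real.exp (-1) / Real.Gamma γ * x ^ (γ - 1)) (Set.Ioc 0 t) := by
    rw [← intervalIntegrable_iff_integrableOn_Ioc_of_le ht.le]
    exact (intervalIntegral.intervalIntegrable_rpow' (by linarith)).const_mul _
  rw [← MeasureTheory.ofReal_integral_eq_lintegral_ofReal hInt ?_]
  · refine ENNReal.ofReal_le_ofReal ?_
    rw [MeasureTheory.integral_const_mul, ← intervalIntegral.integral_of_le ht.le,
      integral_rpow (Or.inl (by linarith))]
    rw [sub_add_cancel, Real.zero_rpow hγ.ne', sub_zero]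
    exact le_of_eq (by ring)
  · filter_upwards [ae_restrict_mem measurableSet_Ioc] with x hx
    have : (0:ℝ) ≤ x ^ (γ - 1) := Real.rpow_nonneg hx.1.le _
    positivity

theorem max_density_infinite_of_few_summands
    {Ω : Type*} [MeasurableSpace Ω] (μ : Measure Ω) [IsProbabilityMeasure μ]
    (γ : ℝ) (hγ : 0 < γ) (n : ℕ) (hn : 0 < n) (hnγ : n * γ < 1)
    (X : Fin n → Ω → ℝ) (hXmeas : ∀ j, Measurable (X j))
    (hXindep : iIndepFun X μ)
    (hXdist : ∀ j, μ.map (X j) = gammaMeasure γ 1)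
    (a : Fin n → ℝ) (hapos : ∀ j, 0 < a j) :
    essSup (pdf (fun ω => ∑ j, Real.sqrt (a j) * X j ω) μ volume) volume = ⊤ := by
  by_contra hC
  haveI : NeZero n := ⟨hn.ne'⟩
  haveI : Nonempty (Fin n) := ⟨0⟩
  haveI hγprob : IsProbabilityMeasure (gammaMeasure γ 1) := isProbabilityMeasure_gammaMeasure hγ one_pos
  set S : Ω → ℝ := fun ω => ∑ j, Real.sqrt (a j) * X j ω with hSdef
  have hc : ∀ j, 0 < Real.sqrt (a j) := fun j => Real.sqrt_pos.mpr (hapos j)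
  set f : Fin n → Ω → ℝ := fun j ω => Real.sqrt (a j) * X j ω with hfdef
  have hfmeas : ∀ j, Measurable (f j) := fun j => (hXmeas j).const_mul _
  have hSmeas : Measurable S := Finset.measurable_sum _ fun j _ => hfmeas j
  have hfind : iIndepFun f μ :=
    hXindep.comp (fun j (x : ℝ) => Real.sqrt (a j) * x) (fun j => measurable_const_mul _)
  -- decomposition S = f 0 + R
  set R : Ω → ℝ := fun ω => ∑ j ∈ Finset.univ.erase (0 : Fin n), f j ω with hRdef
  have hRmeas : Measurable R := Finset.measurable_sum _ fun j _ => hfmeas j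
  have hSd : S = fun ω => f 0 ω + R ω := by
    funext ω
    simp only [hSdef, hRdef, hfdef]
    rw [← Finset.add_sum_erase _ _ (Finset.mem_univ (0 : Fin n))]
  have hReq : R = ∑ j ∈ Finset.univ.erase (0 : Fin n), f j := by
    funext ω
    simp [hRdef, Finset.sum_apply]
  have hIndep : IndepFun R (f 0) μ := by
    rw [hReq]
    exact hfind.indepFun_finsetSum_of_notMem hfmeas (Finset.notMem_erase _ _)
  have hprod : μ.map (fun ω => (R ω, f 0 ω)) = (μ.map R).prod (μ.map (f 0)) :=
    (indepFun_iff_map_prod_eq_prod_map_map hRmeas.aemeasurable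
      (hfmeas 0).aemeasurable).mp hIndep
  haveI : IsProbabilityMeasure (μ.map R) := Measure.isProbabilityMeasure_map hRmeas.aemeasurable
  haveI : IsProbabilityMeasure (μ.map (f 0)) := Measure.isProbabilityMeasure_map (hfmeas 0).aemeasurable
  have haddmeas : Measurable (fun p : ℝ × ℝ => p.2 + p.1) := measurable_snd.add measurable_fst
  have hmapS : μ.map S = ((μ.map R).prod (μ.map (f 0))).map (fun p : ℝ × ℝ => p.2 + p.1) := by
    rw [← hprod, Measure.map_map haddmeas (hRmeas.prodMk (hfmeas 0))]
    congr 1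
  have hmapf0 : μ.map (f 0) = (gammaMeasure γ 1).map (fun x => Real.sqrt (a 0) * x) := by
    rw [← hXdist 0, Measure.map_map (measurable_const_mul _) (hXmeas 0)]
    rfl
  -- absolute continuity
  have hac : μ.map S ≪ volume := by
    refine Measure.AbsolutelyContinuous.mk fun N hN hN0 => ?_
    rw [hmapS, Measure.map_apply haddmeas hN, Measure.prod_apply (haddmeas hN)]
    have hz : ∀ y : ℝ, (μ.map (f 0)) (Prod.mk y ⁻¹' {p : ℝ × ℝ | p.2 + p.1 ∈ N}) = 0 := by
      intro y
      have hpre : (Prod.mk y ⁻¹' {p : ℝ × ℝ | p.2 + p.1 ∈ N}) = (fun x => x + y) ⁻¹' N := rfl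
      rw [hpre, hmapf0,
        Measure.map_apply (measurable_const_mul _) ((measurable_add_const y) hN)]
      refine (withDensity_absolutelyContinuous volume _) ?_
      rw [Real.volume_preimage_mul_left (hc 0).ne', measure_preimage_add_right volume y N, hN0,
        mul_zero]
    exact (lintegral_congr hz).trans lintegral_zero
  -- upper bound via essSup
  set C := essSup (pdf S μ volume) volume with hCdef
  have hub : ∀ ε : ℝ, 0 ≤ ε → (μ.map S) (Set.Icc 0 ε) ≤ C * ENNReal.ofReal ε := by
    intro ε hε
    have h1 : (μ.map S) (Set.Icc 0 ε) = ∫⁻ x in Set.Icc 0 ε, pdf S μ volume x := by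
      rw [pdf_def]
      conv_lhs => rw [← Measure.withDensity_rnDeriv_eq _ _ hac]
      rw [withDensity_apply _ measurableSet_Icc]
    rw [h1]
    calc ∫⁻ x in Set.Icc 0 ε, pdf S μ volume x ≤ ∫⁻ _ in Set.Icc 0 ε, C :=
          lintegral_mono_ae (ae_restrict_of_ae (ENNReal.ae_le_essSup _))
      _ = C * volume (Set.Icc 0 ε) := by rw [setLIntegral_const]
      _ = C * ENNReal.ofReal ε := by rw [Real.volume_Icc, sub_zero]
  -- lower bound
  set K0 : ℝ := Real.exp (-1) / (Real.Gamma γ * γ) with hK0def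
  have hK0 : 0 < K0 := by
    have := Real.Gamma_pos_of_pos hγ
    positivity
  set D : ℝ := ∏ j, (K0 * (((n : ℝ) * Real.sqrt (a j))⁻¹) ^ γ) with hDdef
  have hD : 0 < D := by
    refine Finset.prod_pos fun j _ => ?_
    have h1 : (0:ℝ) < ((n : ℝ) * Real.sqrt (a j))⁻¹ := by
      have := hc j
      have hn' : (0:ℝ) < n := Nat.cast_pos.mpr hn
      positivity
    positivity
  set ε₀ : ℝ := min 1 (Finset.univ.inf' Finset.univ_nonempty
    (fun j => (n : ℝ) * Real.sqrt (a j))) with hε₀def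
  have hε₀ : 0 < ε₀ := by
    refine lt_min one_pos ?_
    rw [Finset.lt_inf'_iff]
    intro j _
    have hn' : (0:ℝ) < n := Nat.cast_pos.mpr hn
    exact mul_pos hn' (hc j)
  have hlb : ∀ ε : ℝ, 0 < ε → ε ≤ ε₀ →
      ENNReal.ofReal (D * ε ^ ((n : ℝ) * γ)) ≤ (μ.map S) (Set.Icc 0 ε) := by
    intro ε hε hεle
    set t : Fin n → ℝ := fun j => ε * ((n : ℝ) * Real.sqrt (a j))⁻¹ with htdef
    have hn' : (0:ℝ) < n := Nat.cast_pos.mpr hn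
    have ht : ∀ j, 0 < t j := fun j => by
      have := hc j
      positivity
    have ht1 : ∀ j, t j ≤ 1 := by
      intro j
      have hcj := hc j
      have h1 : ε ≤ (n : ℝ) * Real.sqrt (a j) :=
        le_trans hεle (le_trans (min_le_right _ _) (Finset.inf'_le _ (Finset.mem_univ j)))
      have h2 : (0:ℝ) < (n : ℝ) * Real.sqrt (a j) := by positivity
      calc t j = ε * ((n : ℝ) * Real.sqrt (a j))⁻¹ := rfl
        _ ≤ ((n : ℝ) * Real.sqrt (a j)) * ((n : ℝ) * Real.sqrt (a j))⁻¹ :=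
            mul_le_mul_of_nonneg_right h1 (by positivity)
        _ = 1 := mul_inv_cancel₀ h2.ne'
    -- event inclusion
    have hsub : (⋂ j, X j ⁻¹' Set.Icc 0 (t j)) ⊆ S ⁻¹' Set.Icc (0 : ℝ) ε := by
      intro ω hω
      simp only [Set.mem_iInter, Set.mem_preimage, Set.mem_Icc] at hω ⊢
      constructor
      · exact Finset.sum_nonneg fun j _ => mul_nonneg (Real.sqrt_nonneg _) (hω j).1
      · calc ∑ j, Real.sqrt (a j) * X j ω ≤ ∑ j, Real.sqrt (a j) * t j :=
              Finset.sum_le_sum fun j _ =>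
                mul_le_mul_of_nonneg_left (hω j).2 (Real.sqrt_nonneg _)
          _ = ε := by
              have hterm : ∀ j : Fin n, Real.sqrt (a j) * t j = ε / n := by
                intro j
                have h2 : Real.sqrt (a j) ≠ 0 := (hc j).ne'
                have h3 : (n:ℝ) ≠ 0 := hn'.ne'
                rw [htdef]
                field_simp
              simp only [hterm]
              rw [Finset.sum_const, Finset.card_univ, Fintype.card_fin, nsmul_eq_mul]
              field_simp
    have hInter := hXindep.meas_iInter (s := fun j => X j ⁻¹' Set.Icc 0 (t j))
      (fun j => ⟨Set.Icc 0 (t j), measurableSet_Icc, rfl⟩)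
    have hsingle : ∀ j, μ (X j ⁻¹' Set.Icc 0 (t j)) = gammaMeasure γ 1 (Set.Icc 0 (t j)) := by
      intro j
      rw [← Measure.map_apply (hXmeas j) measurableSet_Icc, hXdist j]
    calc ENNReal.ofReal (D * ε ^ ((n : ℝ) * γ))
        = ∏ j, ENNReal.ofReal (K0 * t j ^ γ) := by
          rw [← ENNReal.ofReal_prod_of_nonneg (fun j _ => by
            have := (ht j).le
            have := hK0.le
            positivity)]
          congr 1
          have hterm : ∀ j : Fin n, K0 * t j ^ γ =
              (K0 * (((n : ℝ) * Real.sqrt (a j))⁻¹) ^ γ) * ε ^ γ := by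
            intro j
            rw [htdef, Real.mul_rpow hε.le (by positivity)]
            ring
          simp only [hterm]
          rw [Finset.prod_mul_distrib, Finset.prod_const, Finset.card_univ, Fintype.card_fin,
            ← hDdef, ← Real.rpow_natCast (ε ^ γ) n, ← Real.rpow_mul hε.le, mul_comm γ]
      _ ≤ ∏ j, gammaMeasure γ 1 (Set.Icc 0 (t j)) :=
          Finset.prod_le_prod' fun j _ => gamma_Icc_lower hγ (ht j) (ht1 j)
      _ = μ (⋂ j, X j ⁻¹' Set.Icc 0 (t j)) := by
          rw [hInter]
          exact Finset.prod_congr rfl fun j _ => (hsingle j).symm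
      _ ≤ μ (S ⁻¹' Set.Icc (0 : ℝ) ε) := measure_mono hsub
      _ = (μ.map S) (Set.Icc 0 ε) := (Measure.map_apply hSmeas measurableSet_Icc).symm
  -- combine
  set p : ℝ := (n : ℝ) * γ with hpdef
  have hp1 : p < 1 := hnγ
  have hp0 : 0 < p := mul_pos (Nat.cast_pos.mpr hn) hγ
  set C' : ℝ := C.toReal with hC'def
  have hCof : C = ENNReal.ofReal C' := (ENNReal.ofReal_toReal hC).symm
  have key : ∀ ε : ℝ, 0 < ε → ε ≤ ε₀ → D ≤ C' * ε ^ (1 - p) := by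
    intro ε hε hεle
    have h := le_trans (hlb ε hε hεle) (hub ε hε.le)
    rw [hCof, ← ENNReal.ofReal_mul ENNReal.toReal_nonneg] at h
    have h2 : D * ε ^ p ≤ C' * ε :=
      (ENNReal.ofReal_le_ofReal_iff (mul_nonneg ENNReal.toReal_nonneg hε.le)).mp h
    have hεp : 0 < ε ^ p := Real.rpow_pos_of_pos hε p
    calc D = (D * ε ^ p) / ε ^ p := by field_simp
      _ ≤ (C' * ε) / ε ^ p := by gcongr
      _ = C' * ε ^ (1 - p) := by
          rw [Real.rpow_sub hε, Real.rpow_one, mul_div_assoc]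
  -- limiting contradiction
  have htends : Filter.Tendsto (fun ε : ℝ => C' * ε ^ (1 - p))
      (nhdsWithin 0 (Set.Ioi 0)) (nhds 0) := by
    have h0 : Filter.Tendsto (fun ε : ℝ => ε ^ (1 - p)) (nhds 0)
        (nhds ((0:ℝ) ^ (1 - p))) :=
      (Real.continuousAt_rpow_const 0 (1 - p) (Or.inr (by linarith))).tendsto
    rw [Real.zero_rpow (by linarith : 1 - p ≠ 0)] at h0
    have h1 : Filter.Tendsto (fun ε : ℝ => ε ^ (1 - p))
        (nhdsWithin 0 (Set.Ioi 0)) (nhds 0) :=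
      h0.mono_left (nhdsWithin_le_nhds (s := Set.Ioi (0:ℝ)))
    have := h1.const_mul C'
    simpa using this
  have hev : ∀ᶠ ε in nhdsWithin 0 (Set.Ioi 0), D ≤ C' * ε ^ (1 - p) := by
    filter_upwards [Ioc_mem_nhdsGT hε₀, self_mem_nhdsWithin] with ε h1 h2
    exact key ε h2 h1.2
  have hD0 : D ≤ 0 := ge_of_tendsto htends hev
  linarith
end

section
/- (Moriguti) Let X be a real random variable having a density f with respect to Lebesgue measure and finite nonzero variance. Then ‖f‖_∞ ≥ 1/√(12 · Var(X)). -/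
open MeasureTheory ProbabilityTheory Real

lemma moriguti_bathtub {h : ℝ → ℝ} {m c : ℝ} (hm : 0 < m)
    (h0 : ∀ x, 0 ≤ h x) (hle : ∀ᵐ x ∂volume, h x ≤ m)
    (hint : Integrable h volume) (hint1 : ∫ x, h x = 1)
    (hq : Integrable (fun x => (x - c) ^ 2 * h x) volume) :
    1 / (12 * m ^ 2) ≤ ∫ x, (x - c) ^ 2 * h x := by
  set a : ℝ := 1 / (2 * m) with ha
  have ha0 : 0 < a := by positivity
  set A : Set ℝ := Set.Icc (c - a) (c + a) with hA
  -- indicator integrals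
  have hiA : Integrable (A.indicator fun _ => m) volume :=
    (integrableOn_const measure_Icc_lt_top.ne).integrable_indicator measurableSet_Icc
  have hiQ : Integrable (A.indicator fun x => (x - c) ^ 2 * m) volume :=
    (((continuous_id.sub continuous_const).pow 2).mul continuous_const).integrableOn_Icc
      |>.integrable_indicator measurableSet_Icc
  have hψ0 : (0:ℝ) ≤ ∫ x, (((x - c) ^ 2 * h x - a ^ 2 * h x) -
      (A.indicator (fun x => (x - c) ^ 2 * m) x - a ^ 2 * A.indicator (fun _ => m) x)) := by
    refine integral_nonneg_of_ae ?_
    filter_upwards [hle] with x hx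
    simp only [Pi.zero_apply]
    by_cases hxA : x ∈ A
    · have h1 : (x - c) ^ 2 ≤ a ^ 2 := by
        have := hxA.1; have := hxA.2
        have habs : |x - c| ≤ |a| := by
          rw [abs_le, abs_of_pos ha0]; constructor <;> linarith
        calc (x - c) ^ 2 = |x - c| ^ 2 := (sq_abs _).symm
          _ ≤ |a| ^ 2 := by gcongr
          _ = a ^ 2 := sq_abs _
      simp only [Set.indicator_of_mem hxA]
      nlinarith [mul_nonneg (by linarith : (0:ℝ) ≤ a ^ 2 - (x - c) ^ 2) (by linarith : (0:ℝ) ≤ m - h x)]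
    · have h1 : a ^ 2 ≤ (x - c) ^ 2 := by
        simp only [hA, Set.mem_Icc, not_and_or, not_le] at hxA
        rcases hxA with hx1 | hx1 <;> nlinarith
      simp only [Set.indicator_of_notMem hxA]
      nlinarith [mul_nonneg (by linarith : (0:ℝ) ≤ (x - c) ^ 2 - a ^ 2) (h0 x)]
  -- compute the integral of ψ
  have e1 : ∫ x, a ^ 2 * h x = a ^ 2 := by
    rw [integral_const_mul, hint1, mul_one]
  have hvolA : volume A = ENNReal.ofReal (2 * a) := by
    rw [hA, Real.volume_Icc, show c + a - (c - a) = 2 * a by ring]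
  have e2 : ∫ x, A.indicator (fun _ => m) x = 1 := by
    rw [integral_indicator_const _ measurableSet_Icc, measureReal_def, ← hA, hvolA,
      ENNReal.toReal_ofReal (by positivity), smul_eq_mul, ha]
    field_simp
  have e3 : ∫ x, A.indicator (fun x => (x - c) ^ 2 * m) x = 1 / (12 * m ^ 2) := by
    rw [integral_indicator measurableSet_Icc]
    have hle' : c - a ≤ c + a := by linarith
    rw [integral_Icc_eq_integral_Ioc, ← intervalIntegral.integral_of_le hle']
    have : (∫ x in (c - a)..(c + a), (x - c) ^ 2 * m)
        = ∫ x in (c - a - c)..(c + a - c), x ^ 2 * m := by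
      rw [← intervalIntegral.integral_comp_sub_right (fun x => x ^ 2 * m) c]
    rw [this]
    have h5 : c - a - c = -a := by ring
    have h6 : c + a - c = a := by ring
    rw [h5, h6, intervalIntegral.integral_mul_const, integral_pow]
    rw [ha]; field_simp; ring_nf; rw [← mul_pow, mul_inv_cancel₀ hm.ne']; ring
  have e4 : ∫ x, (((x - c) ^ 2 * h x - a ^ 2 * h x) -
      (A.indicator (fun x => (x - c) ^ 2 * m) x - a ^ 2 * A.indicator (fun _ => m) x))
      = (∫ x, (x - c) ^ 2 * h x) - 1 / (12 * m ^ 2) := by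
    have int1 : Integrable (fun x => (x - c) ^ 2 * h x - a ^ 2 * h x) volume :=
      hq.sub (hint.const_mul _)
    have int2 : Integrable (fun x => a ^ 2 * h x) volume := hint.const_mul _
    have int3 : Integrable
        (fun x => A.indicator (fun x => (x - c) ^ 2 * m) x
          - a ^ 2 * A.indicator (fun _ => m) x) volume := hiQ.sub (hiA.const_mul _)
    have int4 : Integrable (fun x => a ^ 2 * A.indicator (fun _ => m) x) volume :=
      hiA.const_mul _
    rw [integral_sub int1 int3, integral_sub hq int2, integral_sub hiQ int4, e1, e3]
    have : ∫ x, a ^ 2 * A.indicator (fun _ => m) x = a ^ 2 := by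
      rw [integral_const_mul, e2, mul_one]
    rw [this]; ring
  linarith [hψ0, e4.symm.le]

theorem moriguti_max_density_lower_bound
    {Ω : Type*} [MeasurableSpace Ω] (μ : Measure Ω) [IsProbabilityMeasure μ]
    (X : Ω → ℝ) (hXmeas : Measurable X)
    (f : ℝ → ℝ) (hf0 : ∀ x, 0 ≤ f x)
    (hfdens : μ.map X = volume.withDensity (fun x => ENNReal.ofReal (f x)))
    (hL2 : MemLp X 2 μ) (hvar : 0 < variance X μ) :
    ENNReal.ofReal (1 / Real.sqrt (12 * variance X μ))
      ≤ essSup (fun x => ENNReal.ofReal (f x)) volume := by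
  set L := essSup (fun x => ENNReal.ofReal (f x)) volume with hL
  rcases eq_or_ne L ⊤ with hLtop | hLtop
  · rw [hLtop]; exact le_top
  set ν : Measure ℝ := μ.map X with hν
  have hνprob : IsProbabilityMeasure ν := Measure.isProbabilityMeasure_map hXmeas.aemeasurable
  have hνac : ν ≪ volume := hfdens ▸ withDensity_absolutelyContinuous volume _
  set g : ℝ → ENNReal := ν.rnDeriv volume with hg
  have hgmeas : Measurable g := Measure.measurable_rnDeriv ν volume
  have hgdens : volume.withDensity g = ν := Measure.withDensity_rnDeriv_eq ν volume hνac
  -- ν s ≤ L * volume s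
  have hνle : ∀ s : Set ℝ, MeasurableSet s → ν s ≤ L * volume s := by
    intro s hs
    rw [hfdens, withDensity_apply _ hs]
    calc ∫⁻ x in s, ENNReal.ofReal (f x) ∂volume ≤ ∫⁻ _ in s, L ∂volume := by
          refine lintegral_mono_ae ?_
          exact ae_restrict_of_ae (ENNReal.ae_le_essSup _)
      _ = L * volume s := by rw [setLIntegral_const]
  -- g ≤ L a.e.
  have hgle : g ≤ᵐ[volume] fun _ => L := by
    refine ae_le_of_forall_setLIntegral_le_of_sigmaFinite hgmeas fun s hs hsfin => ?_
    rw [setLIntegral_const]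
    calc ∫⁻ x in s, g x ∂volume = volume.withDensity g s := (withDensity_apply _ hs).symm
      _ = ν s := by rw [hgdens]
      _ ≤ L * volume s := hνle s hs
  have hglt : ∀ᵐ x ∂volume, g x < ⊤ := by
    filter_upwards [hgle] with x hx
    exact hx.trans_lt hLtop.lt_top
  -- L > 0
  have hL0 : L ≠ 0 := by
    intro h0
    have : ν Set.univ = 0 := by
      rw [← hgdens, withDensity_apply _ MeasurableSet.univ, Measure.restrict_univ]
      rw [lintegral_eq_zero_iff hgmeas]
      filter_upwards [hgle] with x hx
      simpa [h0] using hx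
    simp [measure_univ] at this
  set m : ℝ := L.toReal with hm
  have hm0 : 0 < m := ENNReal.toReal_pos hL0 hLtop
  -- real density
  set h : ℝ → ℝ := fun x => (g x).toReal with hh
  have hh0 : ∀ x, 0 ≤ h x := fun x => ENNReal.toReal_nonneg
  have hhle : ∀ᵐ x ∂volume, h x ≤ m := by
    filter_upwards [hgle, hglt] with x hx hx'
    exact ENNReal.toReal_mono hLtop hx
  have hlintg : ∫⁻ x, g x ∂volume = 1 := by
    rw [← setLIntegral_univ, ← withDensity_apply _ MeasurableSet.univ, hgdens, measure_univ]
  have hhint : Integrable h volume := by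
    refine integrable_toReal_of_lintegral_ne_top hgmeas.aemeasurable ?_
    rw [hlintg]; exact ENNReal.one_ne_top
  have hhint1 : ∫ x, h x = 1 := by
    rw [hh, integral_toReal hgmeas.aemeasurable hglt, hlintg, ENNReal.toReal_one]
  set c : ℝ := μ[X] with hc
  -- evariance via lintegral over ν
  have hq_meas : Measurable fun x : ℝ => ENNReal.ofReal ((x - c) ^ 2) :=
    (measurable_id.sub_const c |>.pow_const 2).ennreal_ofReal
  have hev : evariance X μ = ∫⁻ x, ENNReal.ofReal ((x - c) ^ 2) * g x ∂volume := by
    rw [evariance_eq_lintegral_ofReal, ← hc]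
    rw [← lintegral_map hq_meas hXmeas, ← hν, ← hgdens,
      lintegral_withDensity_eq_lintegral_mul volume hgmeas hq_meas]
    simp only [Pi.mul_apply, mul_comm]
  have hevne : evariance X μ ≠ ⊤ := hL2.evariance_lt_top.ne
  have hVar : variance X μ = ∫ x, (x - c) ^ 2 * h x := by
    have heq : ∀ᵐ x ∂volume,
        (ENNReal.ofReal ((x - c) ^ 2) * g x).toReal = (x - c) ^ 2 * h x := by
      filter_upwards [hglt] with x hx
      rw [ENNReal.toReal_mul, ENNReal.toReal_ofReal (sq_nonneg _)]
    rw [variance, hev, ← integral_toReal (f := fun x => ENNReal.ofReal ((x - c) ^ 2) * g x) (hq_meas.mul hgmeas).aemeasurable ?_]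
    · exact integral_congr_ae heq
    · filter_upwards [hglt] with x hx
      exact ENNReal.mul_lt_top ENNReal.ofReal_lt_top hx
  have hqint : Integrable (fun x => (x - c) ^ 2 * h x) volume := by
    have := integrable_toReal_of_lintegral_ne_top (f := fun x => ENNReal.ofReal ((x - c) ^ 2) * g x) (hq_meas.mul hgmeas).aemeasurable
      (by rw [← hev]; exact hevne)
    refine this.congr ?_
    filter_upwards [hglt] with x hx
    rw [ENNReal.toReal_mul, ENNReal.toReal_ofReal (sq_nonneg _)]
  have hmain : 1 / (12 * m ^ 2) ≤ variance X μ := by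
    rw [hVar]
    exact moriguti_bathtub hm0 hh0 hhle hhint hhint1 hqint
  -- conclude
  have hfin : 1 / Real.sqrt (12 * variance X μ) ≤ m := by
    have h12 : 1 / m ^ 2 ≤ 12 * variance X μ := by
      rw [div_le_iff₀ (by positivity)] at hmain ⊢ <;> nlinarith
    have h1m : Real.sqrt (1 / m ^ 2) = 1 / m := by
      rw [one_div, one_div, Real.sqrt_inv, Real.sqrt_sq hm0.le]
    have hs : 1 / m ≤ Real.sqrt (12 * variance X μ) := h1m ▸ Real.sqrt_le_sqrt h12
    calc 1 / Real.sqrt (12 * variance X μ) ≤ 1 / (1 / m) :=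
          one_div_le_one_div_of_le (by positivity) hs
      _ = m := one_div_one_div m
  calc ENNReal.ofReal (1 / Real.sqrt (12 * variance X μ)) ≤ ENNReal.ofReal m :=
        ENNReal.ofReal_le_ofReal hfin
    _ = L := ENNReal.ofReal_toReal hLtop
end
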